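/- arXiv:2411.04636 — 6 statements merged into one kernel-verified Lean document; each statement's English description precedes it below -/
import Mathlib

section
/- Let m_1,…,m_N ∈ K^× and Y := y_{i_1}(1/m_1)·y_{i_2}(1/m_2)⋯y_{i_N}(1/m_N), where (i_1,…,i_N) = i_0. For 1 ≤ i < j ≤ n write m_{ji} := m_{s_i+j−i}, and for index sets J, K' let Δ^J_{K'}(Y) denote the minor of Y with row set J and column set K'. Then all the minors appearing below are nonzero and: m_{ni} = Δ^{{n}}_{{n−i+1}}(Y)/Δ^{{n}}_{{n−i}}(Y) for 1 ≤ i ≤ n−1; and for 1 ≤ i < j ≤ n−1, m_{ji} = (Δ^{[j+1,n]}_{[j−i+1,n−i]}(Y)·Δ^{[j,n]}_{[j−i+1,n−i+1]}(Y)) / (Δ^{[j+1,n]}_{[j−i+2,n−i+1]}(Y)·Δ^{[j,n]}_{[j−i,n−i]}(Y)), where [a,b] := {a, a+1, …, b}. -/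
open Matrix

noncomputable section

variable {K : Type*} [Field K]

/-- `x_i(z)`: identity except entry `z` in (1-based) position `(i, i+1)`. -/
def xMat (n i : ℕ) (z : K) : Matrix (Fin n) (Fin n) K :=
  Matrix.of fun a b => if (a : ℕ) = (b : ℕ) then 1
    else if (a : ℕ) + 1 = i ∧ (b : ℕ) = i then z else 0

/-- `y_i(z)`: identity except entry `z` in (1-based) position `(i+1, i)`. -/
def yMat (n i : ℕ) (z : K) : Matrix (Fin n) (Fin n) K :=
  Matrix.of fun a b => if (a : ℕ) = (b : ℕ) then 1
    else if (a : ℕ) = i ∧ (b : ℕ) + 1 = i then z else 0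

/-- `x_{-i}(z)`: identity except the 2×2 submatrix in (1-based) rows/columns `i, i+1`
is `((z⁻¹, 0), (1, z))`. -/
def xnegMat (n i : ℕ) (z : K) : Matrix (Fin n) (Fin n) K :=
  Matrix.of fun a b =>
    if (a : ℕ) + 1 = i ∧ (b : ℕ) + 1 = i then z⁻¹
    else if (a : ℕ) = i ∧ (b : ℕ) = i then z
    else if (a : ℕ) = i ∧ (b : ℕ) + 1 = i then 1
    else if (a : ℕ) = (b : ℕ) then 1
    else 0

/-- `s̄_i := x_i(-1) · y_i(1) · x_i(-1)`. -/
def sbar (n i : ℕ) : Matrix (Fin n) (Fin n) K :=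
  xMat n i (-1) * yMat n i 1 * xMat n i (-1)

/-- The reduced expression `i₀ = (1,2,…,n-1, 1,2,…,n-2, …, 1,2, 1)` for `w₀`. -/
def i0List (n : ℕ) : List ℕ :=
  ((List.range (n - 1)).map fun j => List.range' 1 (n - 1 - j)).foldr (· ++ ·) []

/-- The reduced expression `i₀' = (n-1,…,1, n-1,…,2, …, n-1,n-2, n-1)` for `w₀`. -/
def i0'List (n : ℕ) : List ℕ :=
  ((List.range (n - 1)).map fun j => (List.range' (1 + j) (n - 1 - j)).reverse).foldr (· ++ ·) []

/-- The matrix `w̄₀ = s̄_{i_1} ⋯ s̄_{i_N}` (computed along `i₀`; it is independent of the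
choice of reduced expression). -/
def w0Mat (n : ℕ) : Matrix (Fin n) (Fin n) K :=
  ((i0List n).map fun i => sbar n i).prod

/-- `x_{-i_1}(z_1) ⋯ x_{-i_N}(z_N)` along the word `l` (with 1-based coordinates `z`). -/
def xnegProd (n : ℕ) (l : List ℕ) (z : ℕ → K) : Matrix (Fin n) (Fin n) K :=
  ((List.range l.length).map fun r => xnegMat n (l.getD r 0) (z (r + 1))).prod

/-- `x_{i_1}(p_1) ⋯ x_{i_N}(p_N)` along the word `l`. -/
def xProd (n : ℕ) (l : List ℕ) (p : ℕ → K) : Matrix (Fin n) (Fin n) K :=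
  ((List.range l.length).map fun r => xMat n (l.getD r 0) (p (r + 1))).prod

/-- `y_{i_1}(q_1) ⋯ y_{i_N}(q_N)` along the word `l`. -/
def yProd (n : ℕ) (l : List ℕ) (q : ℕ → K) : Matrix (Fin n) (Fin n) K :=
  ((List.range l.length).map fun r => yMat n (l.getD r 0) (q (r + 1))).prod

/-- The adjacent transposition `σ_i` (swapping `i` and `i+1`), as a function on `ℕ`. -/
def sigmaFun (i : ℕ) : ℕ → ℕ := fun k => if k = i then i + 1 else if k = i + 1 then i else k

/-- `σ_{i_1} ∘ σ_{i_2} ∘ ⋯ ∘ σ_{i_N}` (rightmost factor applied first). -/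
def wordPerm (l : List ℕ) : ℕ → ℕ := l.foldr (fun i f => sigmaFun i ∘ f) id

/-- A reduced expression for the longest element `w₀` of `Sₙ`. -/
def IsReducedWord (n : ℕ) (l : List ℕ) : Prop :=
  l.length = n * (n - 1) / 2 ∧ (∀ i ∈ l, 1 ≤ i ∧ i ≤ n - 1) ∧
    ∀ k, 1 ≤ k → k ≤ n → wordPerm l k = n + 1 - k

/-- Lower unitriangular. -/
def IsLowerUni {n : ℕ} (M : Matrix (Fin n) (Fin n) K) : Prop :=
  (∀ i, M i i = 1) ∧ ∀ i j : Fin n, i < j → M i j = 0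

/-- Upper unitriangular. -/
def IsUpperUni {n : ℕ} (M : Matrix (Fin n) (Fin n) K) : Prop :=
  (∀ i, M i i = 1) ∧ ∀ i j : Fin n, j < i → M i j = 0

/-- `s_k := Σ_{j=1}^{k-1} (n - j)`. -/
def sIdx (n k : ℕ) : ℕ := ∑ j ∈ Finset.range (k - 1), (n - (j + 1))

/-- 1-based access to a matrix entry (junk value `0` out of range). -/
def Mget {n : ℕ} (M : Matrix (Fin n) (Fin n) K) (i j : ℕ) : K :=
  if h : i - 1 < n ∧ j - 1 < n then M ⟨i - 1, h.1⟩ ⟨j - 1, h.2⟩ else 0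

/-- The minor `Δ^{[a, a+sz-1]}_{[c, c+sz-1]}(M)` with consecutive (1-based) row set starting
at `a` and column set starting at `c`, both of size `sz`. -/
def minorM {n : ℕ} (M : Matrix (Fin n) (Fin n) K) (sz a c : ℕ) : K :=
  (Matrix.of fun p q : Fin sz => Mget M (a + (p : ℕ)) (c + (q : ℕ))).det


/-!
Write `q r = (m r)⁻¹`. Splitting `i₀` into its blocks `(1, …, n - 1 - k)` gives
`Y = B₁ B₂ ⋯ B_{n-1}` with `B_k = y₁(q) ⋯ y_{n-k}(q)` unipotent lower bidiagonal. Left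
multiplication by `B₁` adds `q`-multiples of the row above to rows `2, …, n`. On a
bottom-justified minor this is a bidiagonal row operation whose one extra row (row `n` of
`B₂ ⋯ B_{n-1}`, a unit row) vanishes on the columns involved, so the minor is a product of `sz`
of the `q`'s times a minor of `B₂ ⋯ B_{n-1}` one row higher. By induction every
bottom-justified minor is the monomial `blockTailProd`, and in the quotients of the statement
everything cancels except a single `(q r)⁻¹ = m r`.
-/

theorem Matrix.det_of_succ_add_mul_castSucc {R : Type*} [CommRing R] {sz : ℕ}
    (g : Fin (sz + 1) → Fin sz → R) (d : Fin sz → R) (hg : g (Fin.last sz) = 0) :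
    (Matrix.of fun p j => g p.succ j + d p * g p.castSucc j).det =
      (∏ p, d p) * (Matrix.of fun p j => g p.castSucc j).det := by
  let T : Matrix (Fin sz) (Fin sz) R :=
    Matrix.of fun p p' => (if p' = p then d p else 0) + if (p' : ℕ) = p + 1 then 1 else 0
  have hT : (Matrix.of fun p j => g p.succ j + d p * g p.castSucc j) =
      T * Matrix.of fun p j => g p.castSucc j := by
    ext p j
    simp only [T, Matrix.mul_apply, Matrix.of_apply, add_mul, ite_mul, one_mul, zero_mul,
      Finset.sum_add_distrib, Finset.sum_ite_eq', Finset.mem_univ, if_true]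
    rw [add_comm]
    congr 1
    by_cases hp : (p : ℕ) + 1 < sz
    · rw [show p.succ = (⟨p + 1, hp⟩ : Fin sz).castSucc from rfl,
        Finset.sum_eq_single ⟨p + 1, hp⟩
          (fun b _ hb => if_neg (by simpa [Fin.ext_iff] using hb)) (by simp)]
      simp
    · rw [show p.succ = Fin.last sz from Fin.ext (by simp; omega), hg,
        Finset.sum_eq_zero (fun b _ => if_neg (by omega))]
      rfl
  rw [hT, Matrix.det_mul, Matrix.det_of_isUpperTriangular]
  · simp [T]
  · intro p p' hp
    have : (p' : ℕ) < p := hp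
    simp only [T, Matrix.of_apply]
    rw [if_neg (by omega), if_neg (by omega), add_zero]

lemma yProd_nil (n : ℕ) (q : ℕ → K) : yProd n [] q = 1 := by
  simp [yProd]

lemma yProd_cons (n a : ℕ) (l : List ℕ) (q : ℕ → K) :
    yProd n (a :: l) q = yMat n a (q 1) * yProd n l (fun r => q (r + 1)) := by
  simp [yProd, List.range_succ_eq_map, List.map_map, Function.comp_def]

lemma yProd_append (n : ℕ) (l₁ l₂ : List ℕ) (q : ℕ → K) :
    yProd n (l₁ ++ l₂) q = yProd n l₁ q * yProd n l₂ (fun r => q (r + l₁.length)) := by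
  induction l₁ generalizing q with
  | nil => simp [yProd_nil]
  | cons a l₁ ih =>
    simp only [List.cons_append, yProd_cons, ih, mul_assoc, List.length_cons, add_assoc]

lemma yProd_apply_of_forall_ne (n : ℕ) (l : List ℕ) (q : ℕ → K) (a b : Fin n)
    (ha : ∀ i ∈ l, i ≠ (a : ℕ)) : yProd n l q a b = (1 : Matrix (Fin n) (Fin n) K) a b := by
  induction l generalizing q with
  | nil => rw [yProd_nil]
  | cons i l ih =>
    have hrow : ∀ c, yMat n i (q 1) a c = (1 : Matrix (Fin n) (Fin n) K) a c := by
      intro c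
      have := ha i (by simp)
      simp only [yMat, Matrix.of_apply, Matrix.one_apply, Fin.ext_iff]
      split_ifs <;> simp_all
    rw [yProd_cons, Matrix.mul_apply]
    simp only [hrow, ← Matrix.mul_apply, one_mul]
    exact ih _ fun i hi => ha i (List.mem_cons_of_mem _ hi)

lemma isLowerUni_yMat (n i : ℕ) (z : K) : IsLowerUni (yMat n i z) := by
  refine ⟨fun a => by simp [yMat], fun a b hab => ?_⟩
  have : (a : ℕ) < b := hab
  simp only [yMat, Matrix.of_apply]
  split_ifs <;> first | rfl | omega

lemma IsLowerUni.mul {n : ℕ} {A B : Matrix (Fin n) (Fin n) K} (hA : IsLowerUni A)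
    (hB : IsLowerUni B) : IsLowerUni (A * B) := by
  refine ⟨fun i => ?_, fun i j hij => ?_⟩
  · rw [Matrix.mul_apply, Finset.sum_eq_single i, hA.1, hB.1, one_mul]
    · intro c _ hc
      rcases lt_or_gt_of_ne hc with h | h
      · rw [hB.2 c i h, mul_zero]
      · rw [hA.2 i c h, zero_mul]
    · simp
  · rw [Matrix.mul_apply]
    refine Finset.sum_eq_zero fun c _ => ?_
    rcases lt_or_ge c j with h | h
    · rw [hB.2 c j h, mul_zero]
    · rw [hA.2 i c (hij.trans_le h), zero_mul]

lemma isLowerUni_yProd (n : ℕ) (l : List ℕ) (q : ℕ → K) : IsLowerUni (yProd n l q) := by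
  induction l generalizing q with
  | nil =>
    rw [yProd_nil]
    exact ⟨fun i => Matrix.one_apply_eq i, fun i j hij => Matrix.one_apply_ne hij.ne⟩
  | cons i l ih => rw [yProd_cons]; exact (isLowerUni_yMat n i (q 1)).mul (ih _)

lemma IsLowerUni.minorM_self {n : ℕ} {M : Matrix (Fin n) (Fin n) K} (hM : IsLowerUni M)
    (sz : ℕ) {a : ℕ} (ha : 1 ≤ a) (han : a + sz ≤ n + 1) : minorM M sz a a = 1 := by
  have hMget : ∀ p p' : Fin sz, Mget M (a + p) (a + p') =
      M ⟨a + p - 1, by omega⟩ ⟨a + p' - 1, by omega⟩ := fun p p' => dif_pos ⟨by omega, by omega⟩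
  rw [minorM, Matrix.det_of_isLowerTriangular]
  · exact Finset.prod_eq_one fun p _ => by rw [Matrix.of_apply, hMget, hM.1]
  · intro p p' hpp'
    have : (p : ℕ) < p' := hpp'
    rw [Matrix.of_apply, hMget, hM.2]
    simp only [Fin.lt_def]
    omega

def lowerBidiag (n t : ℕ) (q : ℕ → K) : Matrix (Fin n) (Fin n) K :=
  Matrix.of fun a b =>
    if (a : ℕ) = b then 1 else if (a : ℕ) = b + 1 ∧ (a : ℕ) ≤ t then q a else 0

lemma lowerBidiag_zero (n : ℕ) (q : ℕ → K) : lowerBidiag n 0 q = 1 := by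
  ext a b
  simp only [lowerBidiag, Matrix.of_apply, Matrix.one_apply, Fin.ext_iff]
  split_ifs <;> first | rfl | omega

lemma lowerBidiag_mul_yMat (n t : ℕ) (q : ℕ → K) :
    lowerBidiag n t q * yMat n (t + 1) (q (t + 1)) = lowerBidiag n (t + 1) q := by
  have hY : yMat n (t + 1) (q (t + 1)) = 1 + Matrix.of fun c b : Fin n =>
      if (c : ℕ) = t + 1 ∧ (b : ℕ) = t then q (t + 1) else 0 := by
    ext c b
    simp only [yMat, Matrix.add_apply, Matrix.one_apply, Matrix.of_apply, Fin.ext_iff]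
    split_ifs <;> first | omega | simp
  ext a b
  rw [hY, mul_add, mul_one, Matrix.add_apply]
  simp only [Matrix.mul_apply, Matrix.of_apply, mul_ite, mul_zero]
  by_cases hab : (a : ℕ) = t + 1 ∧ (b : ℕ) = t
  · rw [Finset.sum_eq_single a (fun c _ hc => if_neg fun h => hc (Fin.ext (by omega))) (by simp)]
    simp [lowerBidiag, hab]
  · rw [Finset.sum_eq_zero]
    · simp only [lowerBidiag, Matrix.of_apply, add_zero]
      split_ifs <;> first | rfl | omega
    · intro c _
      split_ifs with h
      · simp only [lowerBidiag, Matrix.of_apply]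
        rw [if_neg (by omega), if_neg (by omega), zero_mul]
      · rfl

lemma yProd_range'_one (n t : ℕ) (q : ℕ → K) :
    yProd n (List.range' 1 t) q = lowerBidiag n t q := by
  induction t with
  | zero => rw [List.range'_zero, yProd_nil, lowerBidiag_zero]
  | succ t ih =>
    rw [List.range'_concat, yProd_append, ih, yProd_cons, yProd_nil, mul_one]
    simpa [add_comm] using lowerBidiag_mul_yMat n t q

lemma Mget_lowerBidiag_mul (n t : ℕ) (q : ℕ → K) (Z : Matrix (Fin n) (Fin n) K) (r c : ℕ)
    (hr : 2 ≤ r) (hrt : r ≤ t + 1) (htn : t < n) :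
    Mget (lowerBidiag n t q * Z) r c = Mget Z r c + q (r - 1) * Mget Z (r - 1) c := by
  unfold Mget
  by_cases hc : c - 1 < n
  · rw [dif_pos ⟨by omega, hc⟩, dif_pos ⟨by omega, hc⟩, dif_pos ⟨by omega, hc⟩, Matrix.mul_apply,
      Fintype.sum_eq_add ⟨r - 1, by omega⟩ ⟨r - 1 - 1, by omega⟩ (by simp [Fin.ext_iff]; omega)]
    · simp only [lowerBidiag, Matrix.of_apply]
      rw [if_true, if_neg (by omega), if_pos ⟨by omega, by omega⟩, one_mul]
    · intro x hx
      simp only [lowerBidiag, Matrix.of_apply, Ne, Fin.ext_iff] at hx ⊢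
      rw [if_neg (by omega), if_neg (by omega), zero_mul]
  · simp [hc]

lemma minorM_lowerBidiag_mul (n t : ℕ) (q : ℕ → K) (Z : Matrix (Fin n) (Fin n) K) (sz c : ℕ)
    (hsz : sz ≤ t) (htn : t < n) (hZ : ∀ u < sz, Mget Z (t + 1) (c + u) = 0) :
    minorM (lowerBidiag n t q * Z) sz (t + 2 - sz) c =
      (∏ u ∈ Finset.range sz, q (t + 1 - sz + u)) * minorM Z sz (t + 1 - sz) c := by
  have hdet := Matrix.det_of_succ_add_mul_castSucc
    (fun (p : Fin (sz + 1)) (j : Fin sz) => Mget Z (t + 1 - sz + p) (c + j))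
    (fun p => q (t + 1 - sz + p)) (funext fun j => by
      simpa only [Fin.val_last, Nat.sub_add_cancel (by omega : sz ≤ t + 1), Pi.zero_apply] using
        hZ j j.2)
  simp only [Fin.prod_univ_eq_prod_range (fun u => q (t + 1 - sz + u)), Fin.val_castSucc] at hdet
  rw [minorM, minorM, ← hdet]
  congr 1
  ext p j
  simp only [Matrix.of_apply, Fin.val_succ]
  rw [Mget_lowerBidiag_mul n t q Z _ _ (by omega) (by omega) htn,
    show t + 2 - sz + p - 1 = t + 1 - sz + p by omega,
    show t + 1 - sz + (p + 1) = t + 2 - sz + p by omega]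

lemma i0List_succ (n : ℕ) : i0List (n + 1) = List.range' 1 n ++ i0List n := by
  cases n <;> simp [i0List, List.range_succ_eq_map, List.map_map, Function.comp_def]

lemma lt_of_mem_i0List {n i : ℕ} (hi : i ∈ i0List n) : i < n := by
  induction n with
  | zero => simp [i0List] at hi
  | succ n ih =>
    rw [i0List_succ, List.mem_append, List.mem_range'_1] at hi
    rcases hi with hi | hi
    · omega
    · exact (ih hi).trans n.lt_succ_self

lemma yProd_i0List_succ (n n' : ℕ) (q : ℕ → K) :
    yProd n (i0List (n' + 1)) q =
      lowerBidiag n n' q * yProd n (i0List n') (fun r => q (r + n')) := by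
  rw [i0List_succ, yProd_append, yProd_range'_one, List.length_range']

lemma sIdx_one (n : ℕ) : sIdx n 1 = 0 := by simp [sIdx]

lemma sIdx_add_two (n k : ℕ) : sIdx n (k + 2) = sIdx n (k + 1) + (n - (k + 1)) :=
  Finset.sum_range_succ _ _

lemma sIdx_succ_add_two (n k : ℕ) : sIdx (n + 1) (k + 2) = n + sIdx n (k + 1) := by
  rw [sIdx, sIdx, Nat.add_sub_cancel, show k + 2 - 1 = k + 1 from rfl, Finset.sum_range_succ',
    add_comm]
  exact congrArg₂ _ rfl (Finset.sum_congr rfl fun j _ => by omega)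

lemma sIdx_mono (n : ℕ) : Monotone (sIdx n) := fun _ _ h =>
  Finset.sum_le_sum_of_subset (Finset.range_mono (Nat.sub_le_sub_right h 1))

lemma sIdx_self (n : ℕ) : sIdx n n = n * (n - 1) / 2 := by
  rw [← Finset.sum_range_id]
  obtain _ | n := n
  · rfl
  rw [sIdx, Nat.add_sub_cancel, Finset.sum_range_succ', add_zero, ← Finset.sum_range_reflect]
  exact Finset.sum_congr rfl fun j hj => by rw [Finset.mem_range] at hj; omega

lemma sIdx_add_le {n k v : ℕ} (hk : k + 1 < n) (hv : v ≤ n - (k + 1)) :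
    sIdx n (k + 1) + v ≤ n * (n - 1) / 2 :=
  calc sIdx n (k + 1) + v ≤ sIdx n (k + 2) := by rw [sIdx_add_two]; omega
    _ ≤ sIdx n n := sIdx_mono n (by omega)
    _ = n * (n - 1) / 2 := sIdx_self n

section blockTailProd

variable {M : Type*} [CommMonoid M]

/-- The product of `q` over the last `sz` letters of each of the first `t` blocks of `i₀`. -/
def blockTailProd (q : ℕ → M) (n sz t : ℕ) : M :=
  ∏ k ∈ Finset.range t, ∏ u ∈ Finset.range sz, q (sIdx n (k + 1) + (n - k - sz + u))

@[simp]
lemma blockTailProd_zero_right (q : ℕ → M) (n sz : ℕ) : blockTailProd q n sz 0 = 1 := by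
  simp [blockTailProd]

@[simp]
lemma blockTailProd_zero_size (q : ℕ → M) (n t : ℕ) : blockTailProd q n 0 t = 1 := by
  simp [blockTailProd]

lemma blockTailProd_succ_succ (q : ℕ → M) (n sz t : ℕ) :
    blockTailProd q (n + 1) sz (t + 1) =
      (∏ u ∈ Finset.range sz, q (n + 1 - sz + u)) *
        blockTailProd (fun r => q (r + n)) n sz t := by
  rw [blockTailProd, Finset.prod_range_succ', mul_comm, blockTailProd]
  simp only [sIdx_one, zero_add, Nat.sub_zero, sIdx_succ_add_two]
  congr 1
  refine Finset.prod_congr rfl fun k _ => Finset.prod_congr rfl fun u _ => congrArg q ?_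
  omega

lemma blockTailProd_succ_mul (q : ℕ → M) {n sz t : ℕ} (h : t + sz + 1 < n) :
    blockTailProd q n (sz + 1) (t + 1) * blockTailProd q n sz t =
      q (sIdx n (t + 1) + (n - t - sz - 1)) *
        (blockTailProd q n sz (t + 1) * blockTailProd q n (sz + 1) t) := by
  simp only [blockTailProd, Finset.prod_range_succ _ t]
  rw [Finset.prod_range_succ' _ sz, add_zero, Nat.sub_add_eq,
    Finset.prod_congr rfl fun u _ => congrArg q
      (by omega : sIdx n (t + 1) + (n - t - sz - 1 + (u + 1)) = sIdx n (t + 1) + (n - t - sz + u))]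
  ac_rfl

end blockTailProd

lemma blockTailProd_ne_zero {q : ℕ → K} {n : ℕ}
    (hq : ∀ r, 1 ≤ r → r ≤ n * (n - 1) / 2 → q r ≠ 0) {sz t : ℕ} (h : t + sz ≤ n) :
    blockTailProd q n sz t ≠ 0 :=
  Finset.prod_ne_zero_iff.2 fun k hk => Finset.prod_ne_zero_iff.2 fun u hu => by
    rw [Finset.mem_range] at hk hu
    exact hq _ (by omega) (sIdx_add_le (by omega) (by omega))

lemma minorM_yProd_i0List_of_le {n n' : ℕ} (hn' : n' ≤ n) (q : ℕ → K) {sz c : ℕ} (hc : 1 ≤ c)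
    (hcs : c + sz ≤ n' + 1) :
    minorM (yProd n (i0List n') q) sz (n' + 1 - sz) c =
      blockTailProd q n' sz (n' + 1 - sz - c) := by
  induction n' generalizing q c with
  | zero =>
    rw [show c = 0 + 1 - sz by omega,
      (isLowerUni_yProd n _ q).minorM_self sz (by omega) (by omega)]
    simp
  | succ n' ih =>
    rcases hcs.lt_or_eq with hlt | heq
    · have hZ : ∀ u < sz,
          Mget (yProd n (i0List n') (fun r => q (r + n'))) (n' + 1) (c + u) = 0 := by
        intro u hu
        rw [Mget, dif_pos ⟨by omega, by omega⟩]
        exact (yProd_apply_of_forall_ne n _ _ ⟨n', by omega⟩ _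
          fun i hi => (lt_of_mem_i0List hi).ne).trans
            (Matrix.one_apply_ne (by simp [Fin.ext_iff]; omega))
      rw [yProd_i0List_succ, minorM_lowerBidiag_mul n n' q _ sz c (by omega) (by omega) hZ,
        ih (by omega) _ hc (by omega), show n' + 1 + 1 - sz - c = n' + 1 - sz - c + 1 by omega,
        blockTailProd_succ_succ]
    · rw [show c = n' + 1 + 1 - sz by omega,
        (isLowerUni_yProd n _ q).minorM_self sz (by omega) (by omega)]
      simp

lemma minorM_yProd_i0List {n : ℕ} (q : ℕ → K) (sz a c t : ℕ) (ha : a + sz = n + 1)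
    (hc : c + t = a) (hc₁ : 1 ≤ c) :
    minorM (yProd n (i0List n) q) sz a c = blockTailProd q n sz t := by
  obtain rfl : a = n + 1 - sz := by omega
  rw [minorM_yProd_i0List_of_le le_rfl q hc₁ (by omega), show n + 1 - sz - c = t by omega]

lemma inv_eq_blockTailProd_div {q : ℕ → K} {n : ℕ}
    (hq : ∀ r, 1 ≤ r → r ≤ n * (n - 1) / 2 → q r ≠ 0) {i j : ℕ} (hi : 1 ≤ i) (hij : i < j)
    (hj : j ≤ n) :
    (q (sIdx n i + (j - i)))⁻¹ =
      blockTailProd q n (n - j) i * blockTailProd q n (n - j + 1) (i - 1) /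
        (blockTailProd q n (n - j) (i - 1) * blockTailProd q n (n - j + 1) i) := by
  obtain ⟨t, rfl⟩ : ∃ t, i = t + 1 := ⟨i - 1, by omega⟩
  have hcross := blockTailProd_succ_mul q (n := n) (sz := n - j) (t := t) (by omega)
  rw [show n - t - (n - j) - 1 = j - (t + 1) by omega] at hcross
  have hden := mul_ne_zero (blockTailProd_ne_zero hq (sz := n - j) (t := t) (by omega))
    (blockTailProd_ne_zero hq (sz := n - j + 1) (t := t + 1) (by omega))
  rw [Nat.add_sub_cancel, eq_div_iff hden, mul_comm (blockTailProd q n (n - j) t), hcross,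
    inv_mul_cancel_left₀ (hq (sIdx n (t + 1) + (j - (t + 1))) (by omega)
      (sIdx_add_le (by omega) (by omega)))]

theorem stmt13_general (n : ℕ) (m : ℕ → K)
    (hm : ∀ r, 1 ≤ r → r ≤ n * (n - 1) / 2 → m r ≠ 0)
    (Y : Matrix (Fin n) (Fin n) K) (hY : Y = yProd n (i0List n) (fun r => (m r)⁻¹)) :
    (∀ i, 1 ≤ i → i ≤ n - 1 →
      minorM Y 1 n (n - i + 1) ≠ 0 ∧ minorM Y 1 n (n - i) ≠ 0 ∧
      m (sIdx n i + (n - i)) = minorM Y 1 n (n - i + 1) / minorM Y 1 n (n - i)) ∧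
    (∀ i j, 1 ≤ i → i < j → j ≤ n - 1 →
      minorM Y (n - j) (j + 1) (j - i + 1) ≠ 0 ∧
      minorM Y (n - j + 1) j (j - i + 1) ≠ 0 ∧
      minorM Y (n - j) (j + 1) (j - i + 2) ≠ 0 ∧
      minorM Y (n - j + 1) j (j - i) ≠ 0 ∧
      m (sIdx n i + (j - i)) =
        (minorM Y (n - j) (j + 1) (j - i + 1) * minorM Y (n - j + 1) j (j - i + 1)) /
        (minorM Y (n - j) (j + 1) (j - i + 2) * minorM Y (n - j + 1) j (j - i))) := by
  set q : ℕ → K := fun r => (m r)⁻¹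
  have hq : ∀ r, 1 ≤ r → r ≤ n * (n - 1) / 2 → q r ≠ 0 := fun r h₁ h₂ =>
    inv_ne_zero (hm r h₁ h₂)
  have hm_eq : ∀ r, m r = (q r)⁻¹ := fun r => (inv_inv (m r)).symm
  subst hY
  refine ⟨fun i hi hin => ?_, fun i j hi hij hjn => ?_⟩
  · rw [minorM_yProd_i0List q 1 n (n - i + 1) (i - 1) (by omega) (by omega) (by omega),
      minorM_yProd_i0List q 1 n (n - i) i (by omega) (by omega) (by omega), hm_eq,
      inv_eq_blockTailProd_div hq hi (by omega) le_rfl]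
    refine ⟨blockTailProd_ne_zero hq (by omega), blockTailProd_ne_zero hq (by omega), ?_⟩
    simp
  · rw [minorM_yProd_i0List q (n - j) (j + 1) (j - i + 1) i (by omega) (by omega) (by omega),
      minorM_yProd_i0List q (n - j + 1) j (j - i + 1) (i - 1) (by omega) (by omega) (by omega),
      minorM_yProd_i0List q (n - j) (j + 1) (j - i + 2) (i - 1) (by omega) (by omega) (by omega),
      minorM_yProd_i0List q (n - j + 1) j (j - i) i (by omega) (by omega) (by omega), hm_eq,
      inv_eq_blockTailProd_div hq hi hij (by omega)]
    exact ⟨blockTailProd_ne_zero hq (by omega), blockTailProd_ne_zero hq (by omega),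
      blockTailProd_ne_zero hq (by omega), blockTailProd_ne_zero hq (by omega), rfl⟩

theorem stmt13 (n : ℕ) (hn : 2 ≤ n) (m : ℕ → K)
    (hm : ∀ r, 1 ≤ r → r ≤ n * (n - 1) / 2 → m r ≠ 0)
    (Y : Matrix (Fin n) (Fin n) K) (hY : Y = yProd n (i0List n) (fun r => (m r)⁻¹)) :
    (∀ i, 1 ≤ i → i ≤ n - 1 →
      minorM Y 1 n (n - i + 1) ≠ 0 ∧ minorM Y 1 n (n - i) ≠ 0 ∧
      m (sIdx n i + (n - i)) = minorM Y 1 n (n - i + 1) / minorM Y 1 n (n - i)) ∧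
    (∀ i j, 1 ≤ i → i < j → j ≤ n - 1 →
      minorM Y (n - j) (j + 1) (j - i + 1) ≠ 0 ∧
      minorM Y (n - j + 1) j (j - i + 1) ≠ 0 ∧
      minorM Y (n - j) (j + 1) (j - i + 2) ≠ 0 ∧
      minorM Y (n - j + 1) j (j - i) ≠ 0 ∧
      m (sIdx n i + (j - i)) =
        (minorM Y (n - j) (j + 1) (j - i + 1) * minorM Y (n - j + 1) j (j - i + 1)) /
        (minorM Y (n - j) (j + 1) (j - i + 2) * minorM Y (n - j + 1) j (j - i))) :=
  stmt13_general n m hm Y hY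
end
end

section
/- Let λ ∈ ℝ^n be dominant (λ_1 ≥ … ≥ λ_n) and ℓ := (1/n)Σ_{i=1}^n λ_i. Let m = (m_1,…,m_N) ∈ (K_{>0})^N and let x : V → K_{>0} satisfy: x((k,k)) = t^{λ_k} for k = 1,…,n; x((i,j))/x((i+1,j)) = R_{ij}(m) for every vertical arrow (1 ≤ j ≤ i ≤ n−1); and the critical point conditions at every dot vertex. Then the assignment n_{ij} := Val_K(m_{s_i+j−i}) for 1 ≤ i < j ≤ n is an ideal filling for λ. -/
noncomputable section

variable {K : Type*} [Field K]

/-- The critical point condition of the GL_n quiver at a dot vertex `(i,j)` (so `1 ≤ j < i ≤ n`),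
for a decoration `x` of the vertices: the sum of the values `x(head)/x(tail)` of the arrows
with head `(i,j)` equals the corresponding sum over the arrows with tail `(i,j)`.  The incoming
arrows are the vertical one from `(i+1,j)` (present iff `i < n`) and the horizontal one from
`(i,j+1)`; the outgoing arrows are the vertical one to `(i-1,j)` and the horizontal one to
`(i,j-1)` (present iff `2 ≤ j`). -/
def critCond (n : ℕ) (x : ℕ → ℕ → K) (i j : ℕ) : Prop :=
  (if i < n then x i j / x (i + 1) j else 0) + x i j / x i (j + 1)
    = x (i - 1) j / x i j + (if 2 ≤ j then x i (j - 1) / x i j else 0)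

/-- The ideal-coordinate decoration: the prescribed value `R_{ij}(m)` of the vertical arrow
with head `(i,j)`. -/
def Rarr (n : ℕ) (m : ℕ → K) (i j : ℕ) : K :=
  (∏ r ∈ Finset.range j, m (sIdx n (j - r) + (i - j + 1 + r))) /
    (∏ r ∈ Finset.range (j - 1), m (sIdx n (j - 1 - r) + (i - j + 1 + r)))

/-- `Ξ_i`: product of the vertex values along the `i`-th diagonal (with `Ξ_{n+1} = 1`). -/
def Xi (n : ℕ) (x : ℕ → ℕ → K) (i : ℕ) : K :=
  ∏ l ∈ Finset.Icc 1 (n + 1 - i), x (i - 1 + l) l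

/-- The field of (generalized) Puiseux series, formalized as Hahn series over `ℝ` with
complex coefficients. -/
abbrev PS : Type := HahnSeries ℝ ℂ

/-- The positive part `K_{>0}`: nonzero series whose lowest-order coefficient is a positive
real number. -/
def PSpos (c : PS) : Prop := c ≠ 0 ∧ ∃ r : ℝ, 0 < r ∧ c.coeff c.order = (r : ℂ)

/-!
Taking valuations turns the hypotheses into tropical identities for `v i j = Val_K x(i,j)`.
Positive series cannot cancel, so each critical point condition becomes an equality of two
minima, while each vertical arrow expresses `v i j - v (i+1) j` through the filling `ν`.
By induction on `j`, the minimum over the arrows entering `(i,j)` is `ν j i`; equivalently,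
the differences `colDiff` of consecutive columns and `rowDiff` of consecutive rows of `ν` are
nonnegative with minimum zero. A descending induction on the gap `c - p` turns this
complementarity into the recursion `ν p c = max (ν (p+1) c) (ν p (c-1))`.

Along the diagonal `x(k,k) = t^{λ_k}`, so `λ_j - λ_{j+1}` is the difference of consecutive
weights `Σ_{c>j} ν j c - Σ_{p<j} ν p j`; these weights sum to zero, which gives the weight
condition. Finally, at a minimal entry `ν q (q+1)` of the first diagonal the recursion gives
`λ_q - λ_{q+1} = 2 ν q (q+1)`, so dominance makes the first diagonal, and with it the whole
filling, nonnegative.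
-/

open Finset HahnSeries
open scoped ComplexOrder

theorem HahnSeries.order_div {Γ R : Type*} [AddCommGroup Γ] [LinearOrder Γ]
    [IsOrderedAddMonoid Γ] [Field R] {a b : HahnSeries Γ R} (ha : a ≠ 0) (hb : b ≠ 0) :
    (a / b).order = a.order - b.order := by
  have h := order_mul (div_ne_zero ha hb) hb
  rw [div_mul_cancel₀ a hb] at h
  rw [h, add_sub_cancel_right]

theorem HahnSeries.order_prod {Γ R ι : Type*} [AddCommMonoid Γ] [LinearOrder Γ]
    [IsOrderedCancelAddMonoid Γ] [CommRing R] [IsDomain R] (s : Finset ι)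
    {f : ι → HahnSeries Γ R} (hf : ∀ i ∈ s, f i ≠ 0) :
    (∏ i ∈ s, f i).order = ∑ i ∈ s, (f i).order := by
  classical
  induction s using Finset.induction_on with
  | empty => simp
  | insert i s hi ih =>
    rw [prod_insert hi, sum_insert hi, order_mul (hf i (mem_insert_self i s))
      (prod_ne_zero_iff.2 fun k hk => hf k (mem_insert_of_mem hk)),
      ih fun k hk => hf k (mem_insert_of_mem hk)]

theorem sum_Icc_eq_add_sum_Icc_succ {M : Type*} [AddCommMonoid M] (f : ℕ → M) {a b : ℕ}
    (h : a ≤ b) : ∑ k ∈ Icc a b, f k = f a + ∑ k ∈ Icc (a + 1) b, f k := by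
  rw [Icc_add_one_left_eq_Ioc, add_sum_Ioc_eq_sum_Icc h]

theorem pspos_iff_leadingCoeff_pos {a : PS} : PSpos a ↔ 0 < a.leadingCoeff := by
  rw [RCLike.pos_iff_exists_ofReal, leadingCoeff_eq]
  refine ⟨fun ⟨_, r, hr, h⟩ => ⟨r, hr, h.symm⟩, fun ⟨r, hr, h⟩ => ⟨?_, r, hr, h.symm⟩⟩
  rintro rfl
  simp [hr.ne'] at h

namespace PSpos

variable {a b : PS}

theorem ne_zero (ha : PSpos a) : a ≠ 0 := ha.1

theorem leadingCoeff_pos (ha : PSpos a) : 0 < a.leadingCoeff :=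
  pspos_iff_leadingCoeff_pos.1 ha

theorem div (ha : PSpos a) (hb : PSpos b) : PSpos (a / b) := by
  have h := leadingCoeff_mul (a / b) b
  rw [div_mul_cancel₀ a hb.ne_zero, eq_comm, ← eq_div_iff hb.leadingCoeff_pos.ne'] at h
  exact pspos_iff_leadingCoeff_pos.2 (h ▸ div_pos ha.leadingCoeff_pos hb.leadingCoeff_pos)

theorem coeff_nonneg (ha : PSpos a) {μ : ℝ} (h : μ ≤ a.order) : 0 ≤ a.coeff μ := by
  rcases h.lt_or_eq with h | rfl
  · rw [coeff_eq_zero_of_lt_order h]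
  · exact leadingCoeff_eq (x := a) ▸ ha.leadingCoeff_pos.le

/-- Leading coefficients in `K_{>0}` cannot cancel. -/
theorem order_add (ha : PSpos a) (hb : PSpos b) : (a + b).order = min a.order b.order := by
  wlog h : a.order ≤ b.order generalizing a b
  · rw [add_comm, min_comm]
    exact this hb ha (le_of_not_ge h)
  have hpos : 0 < (a + b).coeff a.order := by
    rw [coeff_add]
    exact add_pos_of_pos_of_nonneg (leadingCoeff_eq (x := a) ▸ ha.leadingCoeff_pos)
      (hb.coeff_nonneg h)
  have hne : a + b ≠ 0 := fun h0 => by simp [h0] at hpos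
  rw [min_eq_left h]
  refine le_antisymm (order_le_of_coeff_ne_zero hpos.ne') ?_
  simpa [min_eq_left h] using min_order_le_order_add hne

theorem order_div_add_div {c d : PS} (ha : PSpos a) (hb : PSpos b) (hc : PSpos c)
    (hd : PSpos d) : (a / b + c / d).order = min (a.order - b.order) (c.order - d.order) := by
  rw [(ha.div hb).order_add (hc.div hd), order_div ha.ne_zero hb.ne_zero,
    order_div hc.ne_zero hd.ne_zero]

end PSpos

/-- The filling `n_{pc} = Val_K(m_{s_p + c - p})`. -/
def valFilling (n : ℕ) (m : ℕ → PS) (p c : ℕ) : ℝ := (m (sIdx n p + (c - p))).order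

theorem order_Rarr {n i j : ℕ} {m : ℕ → PS} (hR : Rarr n m i j ≠ 0) (hji : j ≤ i) :
    (Rarr n m i j).order =
      ∑ p ∈ Icc 1 j, valFilling n m p (i + 1) - ∑ p ∈ Icc 1 (j - 1), valFilling n m p i := by
  obtain ⟨hnum, hden⟩ := div_ne_zero_iff.1 hR
  rw [Rarr, order_div hnum hden, order_prod _ (prod_ne_zero_iff.1 hnum),
    order_prod _ (prod_ne_zero_iff.1 hden)]
  congr 1
  · refine sum_nbij' (fun r => j - r) (fun p => j - p) ?_ ?_ ?_ ?_ ?_ <;>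
      intro r hr <;> simp only [mem_range, mem_Icc] at hr ⊢
    all_goals first | omega | simp only [valFilling]; congr 3; omega
  · refine sum_nbij' (fun r => j - 1 - r) (fun p => j - 1 - p) ?_ ?_ ?_ ?_ ?_ <;>
      intro r hr <;> simp only [mem_range, mem_Icc] at hr ⊢
    all_goals first | omega | simp only [valFilling]; congr 3; omega

theorem order_sub_order_of_div_eq_Rarr {n i j : ℕ} {m : ℕ → PS} {a b : PS} (ha : PSpos a)
    (hb : PSpos b) (h : a / b = Rarr n m i j) (hji : j ≤ i) :
    a.order - b.order =
      ∑ p ∈ Icc 1 j, valFilling n m p (i + 1) - ∑ p ∈ Icc 1 (j - 1), valFilling n m p i := by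
  rw [← order_div ha.ne_zero hb.ne_zero, h, order_Rarr (h ▸ (ha.div hb).ne_zero) hji]

/-- Valuation of the sum of the values of the arrows entering `(i,j)`. -/
def inflowVal (n : ℕ) (v : ℕ → ℕ → ℝ) (i j : ℕ) : ℝ :=
  if i < n then min (v i j - v (i + 1) j) (v i j - v i (j + 1)) else v i j - v i (j + 1)

/-- Valuation of the sum of the values of the arrows leaving `(i,j)`. -/
def outflowVal (v : ℕ → ℕ → ℝ) (i j : ℕ) : ℝ :=
  if 2 ≤ j then min (v (i - 1) j - v i j) (v i (j - 1) - v i j) else v (i - 1) j - v i j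

theorem inflowVal_eq_outflowVal {n i j : ℕ} {x : ℕ → ℕ → PS}
    (hx : ∀ i j, 1 ≤ j → j ≤ i → i ≤ n → PSpos (x i j)) (hj : 1 ≤ j) (hji : j < i)
    (hin : i ≤ n) (h : critCond n x i j) :
    inflowVal n (fun i j => (x i j).order) i j = outflowVal (fun i j => (x i j).order) i j := by
  have hc := hx i j hj hji.le hin
  have hu := hx (i - 1) j hj (by omega) (by omega)
  have hr := hx i (j + 1) (by omega) hji hin
  unfold critCond at h
  replace h := congrArg order h
  unfold inflowVal outflowVal
  dsimp only
  split_ifs at h ⊢ with hd hl hl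
  · rwa [hc.order_div_add_div (hx (i + 1) j hj (by omega) hd) hc hr,
      hu.order_div_add_div hc (hx i (j - 1) (by omega) (by omega) hin) hc] at h
  · rwa [add_zero, hc.order_div_add_div (hx (i + 1) j hj (by omega) hd) hc hr,
      order_div hu.ne_zero hc.ne_zero] at h
  · rwa [zero_add, hu.order_div_add_div hc (hx i (j - 1) (by omega) (by omega) hin) hc,
      order_div hc.ne_zero hr.ne_zero] at h
  · rwa [zero_add, add_zero, order_div hu.ne_zero hc.ne_zero,
      order_div hc.ne_zero hr.ne_zero] at h

def colDiff (ν : ℕ → ℕ → ℝ) (i j : ℕ) : ℝ := ∑ p ∈ Icc 1 j, (ν p (i + 1) - ν p i)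

def rowDiff (n : ℕ) (ν : ℕ → ℕ → ℝ) (i j : ℕ) : ℝ := ∑ c ∈ Icc (i + 1) n, (ν j c - ν (j + 1) c)

/-- The weight condition of an ideal filling for `λ` reads `fillingWeight n ν k + ℓ = λ_k`. -/
def fillingWeight (n : ℕ) (ν : ℕ → ℕ → ℝ) (k : ℕ) : ℝ :=
  ∑ c ∈ Icc (k + 1) n, ν k c - ∑ p ∈ Icc 1 (k - 1), ν p k

section Differences

variable {n : ℕ} {ν : ℕ → ℕ → ℝ}

@[simp] theorem colDiff_zero (i : ℕ) : colDiff ν i 0 = 0 := by simp [colDiff]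

theorem colDiff_succ (i j : ℕ) :
    colDiff ν i (j + 1) = colDiff ν i j + (ν (j + 1) (i + 1) - ν (j + 1) i) :=
  sum_Icc_succ_top (by omega) _

@[simp] theorem rowDiff_self (j : ℕ) : rowDiff n ν n j = 0 := by simp [rowDiff]

theorem rowDiff_of_lt {i : ℕ} (j : ℕ) (hi : i < n) :
    rowDiff n ν i j = (ν j (i + 1) - ν (j + 1) (i + 1)) + rowDiff n ν (i + 1) j :=
  sum_Icc_eq_add_sum_Icc_succ _ hi

end Differences

section Quiver

/- `v i j` stands for `Val_K x(i,j)` and `ν` for the filling. -/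
variable {n : ℕ} {v ν : ℕ → ℕ → ℝ}
  (hvert : ∀ i j, 1 ≤ j → j ≤ i → i < n →
    v i j - v (i + 1) j = ∑ p ∈ Icc 1 j, ν p (i + 1) - ∑ p ∈ Icc 1 (j - 1), ν p i)
  (hcrit : ∀ i j, 1 ≤ j → j < i → i ≤ n → inflowVal n v i j = outflowVal v i j)

include hvert in
theorem vert_eq_add_colDiff {i j : ℕ} (hj : 1 ≤ j) (hji : j ≤ i) (hi : i < n) :
    v i j - v (i + 1) j = ν j i + colDiff ν i j := by
  obtain ⟨j, rfl⟩ : ∃ k, j = k + 1 := ⟨j - 1, by omega⟩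
  rw [hvert i (j + 1) hj hji hi, colDiff, sum_sub_distrib, sum_Icc_succ_top (by omega),
    sum_Icc_succ_top (by omega), Nat.add_sub_cancel]
  ring

include hvert in
theorem vert_sub_vert {i j : ℕ} (hj : 1 ≤ j) (hji : j < i) (hi : i < n) :
    (v i j - v (i + 1) j) - (v i (j + 1) - v (i + 1) (j + 1)) = ν j i - ν (j + 1) (i + 1) := by
  rw [vert_eq_add_colDiff hvert hj hji.le hi, vert_eq_add_colDiff hvert (by omega) hji hi,
    colDiff_succ]
  ring

include hvert hcrit in
theorem inflowVal_eq_filling {i j : ℕ} (hj : 1 ≤ j) (hji : j < i) (hi : i ≤ n) :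
    inflowVal n v i j = ν j i := by
  induction j, hj using Nat.le_induction generalizing i with
  | base =>
    obtain ⟨i, rfl⟩ : ∃ k, i = k + 1 := ⟨i - 1, by omega⟩
    rw [hcrit _ 1 le_rfl hji hi, outflowVal, if_neg (by omega), Nat.add_sub_cancel,
      hvert i 1 le_rfl (by omega) (by omega)]
    simp
  | succ j hj ih =>
    obtain ⟨i, rfl⟩ : ∃ k, i = k + 1 := ⟨i - 1, by omega⟩
    have hprev := ih (i := i) (by omega) (by omega)
    rw [inflowVal, if_pos (by omega)] at hprev
    -- go around the square with corners `(i, j)` and `(i + 1, j + 1)`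
    have hmin : min (v i (j + 1) - v (i + 1) (j + 1)) (v (i + 1) j - v (i + 1) (j + 1))
        = (v i (j + 1) - v (i + 1) (j + 1)) - (v i j - v (i + 1) j)
          + min (v i j - v (i + 1) j) (v i j - v i (j + 1)) := by
      rw [← min_add_add_left]
      congr 1 <;> ring
    rw [hcrit _ _ (by omega) hji hi, outflowVal, if_pos (by omega), Nat.add_sub_cancel,
      Nat.add_sub_cancel, hmin, hprev]
    linarith [vert_sub_vert hvert (i := i) hj (by omega) (by omega)]

include hvert hcrit in
theorem horiz_eq_add_rowDiff {i j : ℕ} (hj : 1 ≤ j) (hji : j < i) (hi : i ≤ n) :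
    v i j - v i (j + 1) = ν j i + rowDiff n ν i j := by
  induction hi using Nat.decreasingInduction with
  | self =>
    have h := inflowVal_eq_filling hvert hcrit hj hji le_rfl
    rw [inflowVal, if_neg (lt_irrefl n)] at h
    rw [h, rowDiff_self, add_zero]
  | of_succ i hi ih =>
    rw [rowDiff_of_lt j hi]
    linarith [vert_sub_vert hvert hj hji hi, ih (by omega)]

include hvert hcrit in
theorem min_colDiff_rowDiff_eq_zero {i j : ℕ} (hj : 1 ≤ j) (hji : j < i) (hi : i < n) :
    min (colDiff ν i j) (rowDiff n ν i j) = 0 := by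
  have h := inflowVal_eq_filling hvert hcrit hj hji hi.le
  rw [inflowVal, if_pos hi, vert_eq_add_colDiff hvert hj hji.le hi,
    horiz_eq_add_rowDiff hvert hcrit hj hji hi.le, min_add_add_left] at h
  linarith

include hvert hcrit in
theorem diag_sub_diag_eq_fillingWeight_sub {j : ℕ} (hj : 1 ≤ j) (hjn : j < n) :
    v j j - v (j + 1) (j + 1) = fillingWeight n ν j - fillingWeight n ν (j + 1) := by
  have hh := horiz_eq_add_rowDiff hvert hcrit hj (Nat.lt_succ_self j) hjn
  rw [fillingWeight, fillingWeight, Nat.add_sub_cancel, sum_Icc_eq_add_sum_Icc_succ _ hjn,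
    show v j j - v (j + 1) (j + 1) = (v j j - v (j + 1) j) + (v (j + 1) j - v (j + 1) (j + 1))
      by ring, hvert j j hj le_rfl hjn, hh, rowDiff, sum_sub_distrib]
  ring

end Quiver

section IdealRecursion

variable {n : ℕ} {ν : ℕ → ℕ → ℝ}
  (hcompl : ∀ i j, 1 ≤ j → j < i → i < n → min (colDiff ν i j) (rowDiff n ν i j) = 0)

include hcompl in
theorem colDiff_nonneg {i j : ℕ} (hji : j < i) (hi : i < n) : 0 ≤ colDiff ν i j := by
  rcases Nat.eq_zero_or_pos j with rfl | hj
  · rw [colDiff_zero]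
  · exact (hcompl i j hj hji hi).symm ▸ min_le_left _ _

include hcompl in
theorem rowDiff_nonneg {i j : ℕ} (hj : 1 ≤ j) (hji : j < i) (hi : i ≤ n) :
    0 ≤ rowDiff n ν i j := by
  rcases hi.lt_or_eq with hi | rfl
  · exact (hcompl i j hj hji hi).symm ▸ min_le_right _ _
  · rw [rowDiff_self]

include hcompl in
theorem colDiff_eq_zero_or_rowDiff_eq_zero {i j : ℕ} (hj : 1 ≤ j) (hji : j < i) (hi : i < n) :
    colDiff ν i j = 0 ∨ rowDiff n ν i j = 0 := by
  rcases min_choice (colDiff ν i j) (rowDiff n ν i j) with h | h <;>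
    [left; right] <;> rw [← h, hcompl i j hj hji hi]

include hcompl in
theorem le_succ_of_min_colDiff_rowDiff {q i : ℕ} (hqi : q + 1 < i) (hi : i < n)
    (ih : 1 ≤ q → ν q i ≤ ν q (i + 1) ∧ ν (q + 1) (i + 1) ≤ ν q (i + 1)) :
    ν (q + 1) i ≤ ν (q + 1) (i + 1) := by
  have hcol := colDiff_nonneg hcompl hqi hi
  rw [colDiff_succ] at hcol
  obtain hq | ⟨hq, hrow⟩ : colDiff ν i q = 0 ∨ 1 ≤ q ∧ rowDiff n ν i q = 0 := by
    rcases Nat.eq_zero_or_pos q with rfl | hq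
    · exact Or.inl (colDiff_zero i)
    · exact (colDiff_eq_zero_or_rowDiff_eq_zero hcompl hq (by omega) hi).imp id (⟨hq, ·⟩)
  · linarith
  -- rows `q` and `q + 1` agree at column `i + 1`, and row `q` dominates at column `i`
  obtain ⟨ih₁, ih₂⟩ := ih hq
  obtain ⟨i, rfl⟩ : ∃ k, i = k + 1 := ⟨i - 1, by omega⟩
  have hprev := rowDiff_nonneg hcompl (i := i) hq (by omega) (by omega)
  rw [rowDiff_of_lt q (by omega), hrow] at hprev
  have hnext := rowDiff_nonneg hcompl (i := i + 1 + 1) hq (by omega) hi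
  rw [rowDiff_of_lt q hi] at hrow
  linarith

include hcompl in
theorem succ_le_of_min_colDiff_rowDiff {p i : ℕ} (hp : 1 ≤ p) (hpi : p < i) (hi : i < n)
    (ih : i + 1 < n → ν p (i + 1) ≤ ν p (i + 2) ∧ ν (p + 1) (i + 2) ≤ ν p (i + 2)) :
    ν (p + 1) (i + 1) ≤ ν p (i + 1) := by
  have hrow := rowDiff_nonneg hcompl hp hpi hi.le
  rw [rowDiff_of_lt p hi] at hrow
  obtain hr | ⟨hi', hcol⟩ :
      rowDiff n ν (i + 1) p = 0 ∨ i + 1 < n ∧ colDiff ν (i + 1) p = 0 := by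
    rcases (Nat.succ_le_of_lt hi).lt_or_eq with hi' | hi'
    · exact (colDiff_eq_zero_or_rowDiff_eq_zero hcompl hp (by omega) hi').symm.imp id (⟨hi', ·⟩)
    · exact Or.inl (hi' ▸ rowDiff_self p)
  · linarith
  -- columns `i + 1` and `i + 2` agree in row `p`, and column `i + 2` dominates in row `p + 1`
  obtain ⟨q, rfl⟩ : ∃ q, p = q + 1 := ⟨p - 1, by omega⟩
  obtain ⟨ih₁, ih₂⟩ := ih hi'
  have hprev := colDiff_nonneg hcompl (i := i + 1) (j := q) (by omega) hi'
  have hnext := colDiff_nonneg hcompl (i := i + 1) (j := q + 2) (by omega) hi'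
  rw [colDiff_succ] at hcol
  rw [colDiff_succ, colDiff_succ] at hnext
  linarith

include hcompl in
theorem max_rec_of_min_colDiff_rowDiff {p i : ℕ} (hp : 1 ≤ p) (hpi : p < i) (hi : i < n) :
    ν p (i + 1) = max (ν (p + 1) (i + 1)) (ν p i) := by
  -- descending induction on the gap `i - p`
  have mono : ∀ p i, 1 ≤ p → p < i → i < n →
      ν p i ≤ ν p (i + 1) ∧ ν (p + 1) (i + 1) ≤ ν p (i + 1) := by
    intro p i
    induction hk : n + p - i using Nat.strong_induction_on generalizing p i with
    | _ k ih =>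
      intro hp hpi hi
      obtain ⟨q, rfl⟩ : ∃ q, p = q + 1 := ⟨p - 1, by omega⟩
      exact ⟨le_succ_of_min_colDiff_rowDiff hcompl hpi hi fun hq =>
          ih _ (by omega) q i rfl hq (by omega) hi,
        succ_le_of_min_colDiff_rowDiff hcompl hp hpi hi fun hi' =>
          ih _ (by omega) (q + 1) (i + 1) rfl hp (by omega) hi'⟩
  obtain ⟨hcolMono, hrowMono⟩ := mono p i hp hpi hi
  obtain ⟨q, rfl⟩ : ∃ q, p = q + 1 := ⟨p - 1, by omega⟩
  rcases colDiff_eq_zero_or_rowDiff_eq_zero hcompl hp hpi hi with h | h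
  · have := colDiff_nonneg hcompl (j := q) (by omega) hi
    rw [colDiff_succ] at h
    rw [max_eq_right (by linarith)]
    linarith
  · have := rowDiff_nonneg hcompl (i := i + 1) hp (by omega) hi
    rw [rowDiff_of_lt _ hi] at h
    rw [max_eq_left (by linarith)]
    linarith

end IdealRecursion

section IdealFilling

variable {n : ℕ} {ν : ℕ → ℕ → ℝ}
  (hmax : ∀ p i, 1 ≤ p → p < i → i < n → ν p (i + 1) = max (ν (p + 1) (i + 1)) (ν p i))

include hmax in
theorem diag_le_of_max_rec {p c : ℕ} (hp : 1 ≤ p) (hpc : p < c) (hc : c ≤ n) :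
    ν p (p + 1) ≤ ν p c := by
  induction c, Nat.succ_le_of_lt hpc using Nat.le_induction with
  | base => exact le_rfl
  | succ c hc' ih =>
    rw [hmax p c hp hc' hc]
    exact (ih (by omega) (by omega)).trans (le_max_right _ _)

section DiagMin

variable {q : ℕ} (hmin : ∀ r, 1 ≤ r → r < n → ν q (q + 1) ≤ ν r (r + 1))

include hmax hmin in
theorem eq_succ_row_of_diag_min (hq : 1 ≤ q) {c : ℕ} (hqc : q + 1 < c) (hc : c ≤ n) :
    ν q c = ν (q + 1) c := by
  induction c, Nat.succ_le_of_lt hqc using Nat.le_induction with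
  | base => rw [hmax q (q + 1) hq (by omega) hc, max_eq_left (hmin (q + 1) (by omega) (by omega))]
  | succ c hc' ih =>
    rw [hmax q c hq (by omega) hc, ih (by omega) (by omega), hmax (q + 1) c (by omega) hc' hc]
    exact max_eq_left (le_max_right _ _)

include hmax hmin in
theorem eq_pred_col_of_diag_min (hqn : q < n) {p : ℕ} (hp : 1 ≤ p) (hpq : p < q) :
    ν p (q + 1) = ν p q := by
  obtain ⟨q, rfl⟩ : ∃ k, q = k + 1 := ⟨q - 1, by omega⟩
  induction Nat.le_of_lt_succ hpq using Nat.decreasingInduction with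
  | self => rw [hmax q (q + 1) hp (by omega) hqn, max_eq_right (hmin q hp (by omega))]
  | of_succ p hpq' ih =>
    rw [hmax p (q + 1) hp (by omega) hqn, ih (by omega) (by omega), hmax p q hp hpq' (by omega)]
    exact max_eq_right (le_max_left _ _)

include hmax hmin in
theorem fillingWeight_sub_of_diag_min (hq : 1 ≤ q) (hqn : q < n) :
    fillingWeight n ν q - fillingWeight n ν (q + 1) = 2 * ν q (q + 1) := by
  have hsplit : ∑ p ∈ Icc 1 q, ν p (q + 1) = ∑ p ∈ Icc 1 (q - 1), ν p (q + 1) + ν q (q + 1) := by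
    obtain ⟨k, rfl⟩ : ∃ k, q = k + 1 := ⟨q - 1, by omega⟩
    exact sum_Icc_succ_top (by omega) _
  rw [fillingWeight, fillingWeight, sum_Icc_eq_add_sum_Icc_succ _ hqn, Nat.add_sub_cancel,
    hsplit, sum_congr rfl fun c hc => eq_succ_row_of_diag_min hmax hmin hq (c := c)
      (by simp only [mem_Icc] at hc; omega) (mem_Icc.1 hc).2,
    sum_congr rfl fun p hp => eq_pred_col_of_diag_min hmax hmin hqn (p := p) (mem_Icc.1 hp).1
      (by simp only [mem_Icc] at hp; omega)]
  ring

end DiagMin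

include hmax in
theorem nonneg_of_max_rec {lam : ℕ → ℝ} (hdom : ∀ i, 1 ≤ i → i + 1 ≤ n → lam (i + 1) ≤ lam i)
    (hlam : ∀ j, 1 ≤ j → j < n →
      lam j - lam (j + 1) = fillingWeight n ν j - fillingWeight n ν (j + 1))
    {p c : ℕ} (hp : 1 ≤ p) (hpc : p < c) (hc : c ≤ n) : 0 ≤ ν p c := by
  obtain ⟨q, hq, hmin⟩ := (Icc 1 (n - 1)).exists_min_image (fun r => ν r (r + 1))
    ⟨p, by simp only [mem_Icc]; omega⟩
  simp only [mem_Icc] at hq hmin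
  have hdiag := fillingWeight_sub_of_diag_min hmax (fun r hr hrn => hmin r ⟨hr, by omega⟩)
    hq.1 (by omega)
  calc 0 ≤ ν q (q + 1) := by linarith [hlam q hq.1 (by omega), hdom q hq.1 (by omega)]
    _ ≤ ν p (p + 1) := hmin p ⟨hp, by omega⟩
    _ ≤ ν p c := diag_le_of_max_rec hmax hp hpc hc

end IdealFilling

theorem sum_fillingWeight (n : ℕ) (ν : ℕ → ℕ → ℝ) : ∑ k ∈ Icc 1 n, fillingWeight n ν k = 0 := by
  simp only [fillingWeight, sum_sub_distrib, sub_eq_zero]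
  exact sum_comm' fun k c => by simp only [mem_Icc]; omega

theorem fillingWeight_add_eq {n : ℕ} {ν : ℕ → ℕ → ℝ} {lam : ℕ → ℝ} {ell : ℝ}
    (hlam : ∀ j, 1 ≤ j → j < n →
      lam j - lam (j + 1) = fillingWeight n ν j - fillingWeight n ν (j + 1))
    (hell : ell = (∑ i ∈ Icc 1 n, lam i) / n) {k : ℕ} (hk : 1 ≤ k) (hkn : k ≤ n) :
    fillingWeight n ν k + ell = lam k := by
  have hconst : ∀ k, 1 ≤ k → k ≤ n →
      lam k - fillingWeight n ν k = lam 1 - fillingWeight n ν 1 := by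
    intro k hk
    induction k, hk using Nat.le_induction with
    | base => exact fun _ => rfl
    | succ k hk ih => exact fun hkn => by linarith [ih (by omega), hlam k hk (by omega)]
  have hsum : ∑ i ∈ Icc 1 n, lam i = n * (lam 1 - fillingWeight n ν 1) := by
    calc ∑ i ∈ Icc 1 n, lam i
        = ∑ i ∈ Icc 1 n, (lam i - fillingWeight n ν i) + ∑ i ∈ Icc 1 n, fillingWeight n ν i := by
          rw [← sum_add_distrib]
          simp
      _ = n * (lam 1 - fillingWeight n ν 1) := by
          rw [sum_congr rfl fun i hi => hconst i (mem_Icc.1 hi).1 (mem_Icc.1 hi).2,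
            sum_fillingWeight, sum_const, Nat.card_Icc, nsmul_eq_mul]
          simp
  rw [hell, hsum, mul_div_cancel_left₀ _ (Nat.cast_ne_zero.2 (by omega))]
  linarith [hconst k hk hkn]

theorem stmt14_general (n : ℕ) (lam : ℕ → ℝ)
    (hdom : ∀ i, 1 ≤ i → i + 1 ≤ n → lam (i + 1) ≤ lam i)
    (ell : ℝ) (hell : ell = (∑ i ∈ Finset.Icc 1 n, lam i) / n)
    (m : ℕ → PS)
    (x : ℕ → ℕ → PS) (hx : ∀ i j, 1 ≤ j → j ≤ i → i ≤ n → PSpos (x i j))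
    (hstar : ∀ k, 1 ≤ k → k ≤ n → x k k = HahnSeries.single (lam k) 1)
    (hvert : ∀ i j, 1 ≤ j → j ≤ i → i ≤ n - 1 → x i j / x (i + 1) j = Rarr n m i j)
    (hcrit : ∀ i j, 1 ≤ j → j < i → i ≤ n → critCond n x i j) :
    -- the filling n_{ij} := Val_K(m_{s_i + j - i}) is an ideal filling for λ:
    (∀ i j, 1 ≤ i → i < j → j ≤ n → 0 ≤ (m (sIdx n i + (j - i))).order) ∧
    (∀ i j, 1 ≤ i → i < j → j ≤ n → 2 ≤ j - i →
      (m (sIdx n i + (j - i))).order =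
        max (m (sIdx n (i + 1) + (j - (i + 1)))).order (m (sIdx n i + (j - 1 - i))).order) ∧
    (∀ k, 1 ≤ k → k ≤ n →
      (∑ j ∈ Finset.Icc (k + 1) n, (m (sIdx n k + (j - k))).order)
        - (∑ i ∈ Finset.Icc 1 (k - 1), (m (sIdx n i + (k - i))).order) + ell = lam k) := by
  set v : ℕ → ℕ → ℝ := fun i j => (x i j).order
  have hv : ∀ i j, 1 ≤ j → j ≤ i → i < n → v i j - v (i + 1) j =
      ∑ p ∈ Icc 1 j, valFilling n m p (i + 1) - ∑ p ∈ Icc 1 (j - 1), valFilling n m p i :=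
    fun i j hj hji hi => order_sub_order_of_div_eq_Rarr (hx i j hj hji hi.le)
      (hx (i + 1) j hj (by omega) hi) (hvert i j hj hji (by omega)) hji
  have hc : ∀ i j, 1 ≤ j → j < i → i ≤ n → inflowVal n v i j = outflowVal v i j :=
    fun i j hj hji hi => inflowVal_eq_outflowVal hx hj hji hi (hcrit i j hj hji hi)
  have hmax : ∀ p i, 1 ≤ p → p < i → i < n → valFilling n m p (i + 1) =
      max (valFilling n m (p + 1) (i + 1)) (valFilling n m p i) :=
    fun _ _ => max_rec_of_min_colDiff_rowDiff fun _ _ => min_colDiff_rowDiff_eq_zero hv hc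
  have hlam : ∀ j, 1 ≤ j → j < n → lam j - lam (j + 1) =
      fillingWeight n (valFilling n m) j - fillingWeight n (valFilling n m) (j + 1) := by
    intro j hj hjn
    rw [← diag_sub_diag_eq_fillingWeight_sub hv hc hj hjn]
    simp only [v, hstar j hj hjn.le, hstar (j + 1) (by omega) hjn, order_single one_ne_zero]
  refine ⟨fun i j hi hij hj => nonneg_of_max_rec hmax hdom hlam hi hij hj,
    fun i j hi hij hj hgap => ?_, fun k hk hkn => fillingWeight_add_eq hlam hell hk hkn⟩
  obtain ⟨c, rfl⟩ : ∃ c, j = c + 1 := ⟨j - 1, by omega⟩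
  exact hmax i c hi (by omega) (by omega)

theorem stmt14 (n : ℕ) (hn : 2 ≤ n) (lam : ℕ → ℝ)
    (hdom : ∀ i, 1 ≤ i → i + 1 ≤ n → lam (i + 1) ≤ lam i)
    (ell : ℝ) (hell : ell = (∑ i ∈ Finset.Icc 1 n, lam i) / n)
    (m : ℕ → PS) (hm : ∀ r, 1 ≤ r → r ≤ n * (n - 1) / 2 → PSpos (m r))
    (x : ℕ → ℕ → PS) (hx : ∀ i j, 1 ≤ j → j ≤ i → i ≤ n → PSpos (x i j))
    (hstar : ∀ k, 1 ≤ k → k ≤ n → x k k = HahnSeries.single (lam k) 1)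
    (hvert : ∀ i j, 1 ≤ j → j ≤ i → i ≤ n - 1 → x i j / x (i + 1) j = Rarr n m i j)
    (hcrit : ∀ i j, 1 ≤ j → j < i → i ≤ n → critCond n x i j) :
    -- the filling n_{ij} := Val_K(m_{s_i + j - i}) is an ideal filling for λ:
    (∀ i j, 1 ≤ i → i < j → j ≤ n → 0 ≤ (m (sIdx n i + (j - i))).order) ∧
    (∀ i j, 1 ≤ i → i < j → j ≤ n → 2 ≤ j - i →
      (m (sIdx n i + (j - i))).order =
        max (m (sIdx n (i + 1) + (j - (i + 1)))).order (m (sIdx n i + (j - 1 - i))).order) ∧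
    (∀ k, 1 ≤ k → k ≤ n →
      (∑ j ∈ Finset.Icc (k + 1) n, (m (sIdx n k + (j - k))).order)
        - (∑ i ∈ Finset.Icc 1 (k - 1), (m (sIdx n i + (k - i))).order) + ell = lam k) :=
  stmt14_general n lam hdom ell hell m x hx hstar hvert hcrit
end
end

section
/- Let R_+ := {(a,b) : 1 ≤ a < b ≤ n}. For d_1,…,d_n ∈ K^× and m : R_+ → K^×, let t_R(d,m) be the diagonal n×n matrix whose (n+1−j, n+1−j) entry is d_j·(Π_{l=1}^{j−1} m_{(l,j)})/(Π_{l=j+1}^{n} m_{(j,l)}) for j = 1,…,n. For a reduced expression i = (i_1,…,i_N) for w_0, with partial products w_{(r)} := σ_{i_1}∘⋯∘σ_{i_r} (functions composed with the rightmost factor applied first), define the positive-root sequence α^i_r ∈ R_+ for r = 1,…,N as the increasingly ordered pair {w_{(r−1)}(i_r), w_{(r−1)}(i_r+1)}. Suppose i and i' are reduced expressions for w_0 with i'_r = i_r for all r ∉ {k−1, k, k+1}, and (i_{k−1}, i_k, i_{k+1}) = (c,e,c), (i'_{k−1}, i'_k, i'_{k+1}) = (e,c,e) for some c, e with |c − e|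 = 1. Put α := α^i_{k−1}, β := α^i_{k+1}, γ := α^i_k. Let m' : R_+ → K^× with m'_α + m'_β ≠ 0, and define m'' : R_+ → K^× by m''_α := m'_γ·(m'_α + m'_β)/m'_β, m''_γ := m'_α·m'_β/(m'_α + m'_β), m''_β := m'_γ·(m'_α + m'_β)/m'_α, and m''_ρ := m'_ρ for all other ρ ∈ R_+. Then y_{i_1}(1/m'_{α^i_1})⋯y_{i_N}(1/m'_{α^i_N}) = y_{i'_1}(1/m''_{α^{i'}_1})⋯y_{i'_N}(1/m''_{α^{i'}_N}), and t_R(d, m'') = t_R(d, m') for every d ∈ (K^×)^n. -/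
open Matrix

noncomputable section

variable {K : Type*} [Field K]

/-- The positive root `α^i_r` attached to the `r`-th letter (1-based) of the word `l`:
the increasingly ordered pair `{w_{(r-1)}(i_r), w_{(r-1)}(i_r + 1)}`. -/
def rootSeq (l : List ℕ) (r : ℕ) : ℕ × ℕ :=
  (min (wordPerm (l.take (r - 1)) (l.getD (r - 1) 0))
      (wordPerm (l.take (r - 1)) (l.getD (r - 1) 0 + 1)),
   max (wordPerm (l.take (r - 1)) (l.getD (r - 1) 0))
      (wordPerm (l.take (r - 1)) (l.getD (r - 1) 0 + 1)))

/-- `y_{i_1}(1/m_{α^i_1}) ⋯ y_{i_N}(1/m_{α^i_N})` along the word `l`, with coordinates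
indexed by positive roots. -/
def yProdRoots (n : ℕ) (l : List ℕ) (m : ℕ × ℕ → K) : Matrix (Fin n) (Fin n) K :=
  ((List.range l.length).map fun r => yMat n (l.getD r 0) (m (rootSeq l (r + 1)))⁻¹).prod

/-- The universal weight matrix `t_R(d, m)`: the diagonal matrix whose (1-based) entry in
position `(n+1-j, n+1-j)` is `d_j · (Π_{l<j} m_{(l,j)}) / (Π_{l>j} m_{(j,l)})`. -/
def tR (n : ℕ) (d : ℕ → K) (m : ℕ × ℕ → K) : Matrix (Fin n) (Fin n) K :=
  Matrix.diagonal fun a : Fin n =>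
    d (n - (a : ℕ)) * (∏ l ∈ Finset.Icc 1 (n - (a : ℕ) - 1), m (l, n - (a : ℕ))) /
      ∏ l ∈ Finset.Icc (n - (a : ℕ) + 1) n, m (n - (a : ℕ), l)

/-!
Along a reduced word each prefix `w_(r)` has exactly `r` inversions: a letter changes the number
of inversions by `± 1`, and `w₀` has all `N` of them. Hence the `r`-th letter adds exactly the new
inversion `α^i_r`, the roots of a reduced word are pairwise distinct, and `m'' = m'` at every root
outside the window `k - 1, k, k + 1`. By the braid relation the move leaves the roots outside the
window unchanged and turns `α, γ, β` into `β, γ, α`. In the window, the rank-two identity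
`y_c(p) y_e(q) y_c(r) = y_e(qr/(p+r)) y_c(p+r) y_e(pq/(p+r))`, with `p, q, r` the inverses of
`m'_α, m'_γ, m'_β`, gives the first claim. For the second, `m''_α m''_γ = m'_α m'_γ` and
`m''_β m''_γ = m'_β m'_γ`, while `{α, β} = {(x, y), (y, z)}` and `γ = (x, z)`: each diagonal entry
of `t_R` sees `α, β, γ` with exponents `a, b, a + b`, so it does not change.
-/

open Equiv

def wordEquiv (l : List ℕ) : Perm ℕ := (l.map fun a => swap a (a + 1)).prod

lemma sigmaFun_eq_swap (a : ℕ) : sigmaFun a = swap a (a + 1) := by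
  funext x; simp [sigmaFun, swap_apply_def]

lemma wordPerm_eq_wordEquiv (l : List ℕ) : wordPerm l = wordEquiv l := by
  induction l with
  | nil => rfl
  | cons a l ih =>
    change sigmaFun a ∘ wordPerm l = _
    simp [wordEquiv, ih, sigmaFun_eq_swap, Perm.coe_mul]

lemma wordEquiv_take_succ {l : List ℕ} {r : ℕ} (hr : r < l.length) :
    wordEquiv (l.take (r + 1)) = wordEquiv (l.take r) * swap (l.getD r 0) (l.getD r 0 + 1) := by
  rw [List.take_add_one, List.getElem?_eq_getElem hr, Option.toList_some,
    List.getD_eq_getElem _ _ hr]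
  simp only [wordEquiv, List.map_append, List.map_singleton, List.prod_append,
    List.prod_singleton]

lemma rootSeq_succ_eq_min_max (l : List ℕ) (r : ℕ) :
    rootSeq l (r + 1) =
      (min (wordEquiv (l.take r) (l.getD r 0)) (wordEquiv (l.take r) (l.getD r 0 + 1)),
        max (wordEquiv (l.take r) (l.getD r 0)) (wordEquiv (l.take r) (l.getD r 0 + 1))) := by
  simp only [rootSeq, Nat.add_sub_cancel, wordPerm_eq_wordEquiv]

lemma wordEquiv_mem_Icc {n : ℕ} {l : List ℕ} (hl : ∀ a ∈ l, 1 ≤ a ∧ a ≤ n - 1) {x : ℕ}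
    (hx : x ∈ Finset.Icc 1 n) : wordEquiv l x ∈ Finset.Icc 1 n := by
  induction l with
  | nil => simpa [wordEquiv] using hx
  | cons a l ih =>
    have ha := hl a List.mem_cons_self
    have h := Finset.mem_Icc.mp (ih fun b hb => hl b (List.mem_cons_of_mem a hb))
    simp only [wordEquiv, List.map_cons, List.prod_cons, Perm.mul_apply] at h ⊢
    rw [Finset.mem_Icc, swap_apply_def]
    split_ifs <;> omega

lemma swap_braid {c e : ℕ} (hce : c + 1 = e ∨ e + 1 = c) :
    swap c (c + 1) * swap e (e + 1) * swap c (c + 1) =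
      swap e (e + 1) * swap c (c + 1) * swap e (e + 1) := by
  have hsucc (a : ℕ) : swap a (a + 1) * swap (a + 1) (a + 1 + 1) * swap a (a + 1) =
      swap (a + 1) (a + 1 + 1) * swap a (a + 1) * swap (a + 1) (a + 1 + 1) := by
    have h₁ := swap_mul_swap_mul_swap (x := a + 1 + 1) (y := a + 1) (z := a) (by omega) (by omega)
    have h₂ := swap_mul_swap_mul_swap (x := a) (y := a + 1) (z := a + 1 + 1) (by omega) (by omega)
    rw [Equiv.swap_comm (a + 1 + 1) (a + 1), Equiv.swap_comm (a + 1) a] at h₁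
    rw [h₁, h₂, Equiv.swap_comm]
  rcases hce with rfl | rfl
  · exact hsucc c
  · exact (hsucc e).symm

lemma swap_swap_apply_of_adjacent {c e : ℕ} (hce : c + 1 = e ∨ e + 1 = c) :
    swap c (c + 1) (swap e (e + 1) c) = e ∧ swap c (c + 1) (swap e (e + 1) (c + 1)) = e + 1 := by
  rcases hce with rfl | rfl <;> simp (disch := omega) [swap_apply_of_ne_of_ne]

lemma swap_apply_comm_of_adjacent {c e : ℕ} (hce : c + 1 = e ∨ e + 1 = c) :
    swap c (c + 1) e = swap e (e + 1) c ∧ swap c (c + 1) (e + 1) = swap e (e + 1) (c + 1) := by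
  rcases hce with rfl | rfl <;> simp (disch := omega) [swap_apply_of_ne_of_ne]

lemma swap_apply_lt_swap_apply_iff {a u v : ℕ} (h : ¬(u = a ∧ v = a + 1))
    (h' : ¬(u = a + 1 ∧ v = a)) : swap a (a + 1) v < swap a (a + 1) u ↔ v < u := by
  simp only [swap_apply_def]; split_ifs <;> omega

def positiveRoots (n : ℕ) : Finset (ℕ × ℕ) := {p ∈ Finset.Icc 1 n ×ˢ Finset.Icc 1 n | p.1 < p.2}

lemma mem_positiveRoots {n : ℕ} {p : ℕ × ℕ} :
    p ∈ positiveRoots n ↔ 1 ≤ p.1 ∧ p.1 < p.2 ∧ p.2 ≤ n := by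
  simp only [positiveRoots, Finset.mem_filter, Finset.mem_product, Finset.mem_Icc]
  omega

lemma card_positiveRoots (n : ℕ) : (positiveRoots n).card = n * (n - 1) / 2 := by
  rw [positiveRoots, Finset.card_product_filter_lt, Nat.card_Icc, Nat.add_sub_cancel,
    Nat.choose_two_right]

def inversionSet (n : ℕ) (w : Perm ℕ) : Finset (ℕ × ℕ) :=
  {p ∈ positiveRoots n | w⁻¹ p.2 < w⁻¹ p.1}

lemma inversionSet_one (n : ℕ) : inversionSet n 1 = ∅ :=
  Finset.filter_false_of_mem fun p hp => by
    simp only [inv_one, Perm.coe_one, id_eq, not_lt]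
    exact (mem_positiveRoots.mp hp).2.1.le

lemma inversionSet_eq_positiveRoots {n : ℕ} {w : Perm ℕ}
    (hw : ∀ k ∈ Finset.Icc 1 n, w k = n + 1 - k) : inversionSet n w = positiveRoots n := by
  have hinv : ∀ k ∈ Finset.Icc 1 n, w⁻¹ k = n + 1 - k := fun k hk => by
    rw [Finset.mem_Icc] at hk
    rw [Perm.inv_eq_iff_eq, hw _ (by rw [Finset.mem_Icc]; omega)]
    omega
  refine Finset.filter_true_of_mem fun p hp => ?_
  rw [mem_positiveRoots] at hp
  rw [hinv _ (by rw [Finset.mem_Icc]; omega), hinv _ (by rw [Finset.mem_Icc]; omega)]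
  omega

lemma inversionSet_mul_swap {n a : ℕ} {w : Perm ℕ} (ha : w a ∈ Finset.Icc 1 n)
    (ha' : w (a + 1) ∈ Finset.Icc 1 n) (hlt : w a < w (a + 1)) :
    (w a, w (a + 1)) ∉ inversionSet n w ∧
      inversionSet n (w * swap a (a + 1)) = insert (w a, w (a + 1)) (inversionSet n w) := by
  rw [Finset.mem_Icc] at ha ha'
  refine ⟨by simp [inversionSet], ?_⟩
  ext p
  simp only [inversionSet, Finset.mem_insert, Finset.mem_filter, _root_.mul_inv_rev, swap_inv,
    Perm.mul_apply, mem_positiveRoots]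
  by_cases hp : p = (w a, w (a + 1))
  · subst hp
    simp only [Perm.coe_inv, symm_apply_apply, swap_apply_left, swap_apply_right, true_or,
      iff_true]
    exact ⟨⟨ha.1, hlt, ha'.2⟩, a.lt_succ_self⟩
  by_cases hpos : 1 ≤ p.1 ∧ p.1 < p.2 ∧ p.2 ≤ n
  · have h₁ : ¬(w⁻¹ p.1 = a ∧ w⁻¹ p.2 = a + 1) := by
      rintro ⟨h₁, h₂⟩
      exact hp (Prod.ext (by simp [← h₁]) (by simp [← h₂]))
    have h₂ : ¬(w⁻¹ p.1 = a + 1 ∧ w⁻¹ p.2 = a) := by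
      rintro ⟨h₁, h₂⟩
      rw [Perm.inv_eq_iff_eq] at h₁ h₂
      omega
    rw [swap_apply_lt_swap_apply_iff h₁ h₂]
    simp [hp, hpos]
  · simp [hp, hpos]

lemma card_inversionSet_mul_swap {n a : ℕ} {w : Perm ℕ} (ha : w a ∈ Finset.Icc 1 n)
    (ha' : w (a + 1) ∈ Finset.Icc 1 n) :
    (w a < w (a + 1) ∧
        (inversionSet n (w * swap a (a + 1))).card = (inversionSet n w).card + 1) ∨
      (inversionSet n w).card = (inversionSet n (w * swap a (a + 1))).card + 1 := by
  rcases lt_or_gt_of_ne (w.injective.ne (Nat.succ_ne_self a).symm) with hlt | hgt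
  · obtain ⟨hnot, hins⟩ := inversionSet_mul_swap ha ha' hlt
    exact Or.inl ⟨hlt, by rw [hins, Finset.card_insert_of_notMem hnot]⟩
  · have h₁ : (w * swap a (a + 1)) a = w (a + 1) := by simp
    have h₂ : (w * swap a (a + 1)) (a + 1) = w a := by simp
    obtain ⟨hnot, hins⟩ := inversionSet_mul_swap (w := w * swap a (a + 1))
      (h₁ ▸ ha') (h₂ ▸ ha) (by rwa [h₁, h₂])
    rw [mul_swap_mul_self] at hins
    exact Or.inr (by rw [hins, Finset.card_insert_of_notMem hnot])

lemma eq_self_of_step_le_one {c : ℕ → ℕ} {N : ℕ} (h0 : c 0 = 0) (hN : c N = N)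
    (hstep : ∀ r < N, c (r + 1) ≤ c r + 1) {r : ℕ} (hr : r ≤ N) : c r = r := by
  have hle : ∀ r ≤ N, c r ≤ r := by
    intro r
    induction r with
    | zero => simp [h0]
    | succ r ih => intro h; have := hstep r (by omega); have := ih (by omega); omega
  have hge : ∀ d r, r + d = N → N ≤ c r + d := by
    intro d
    induction d with
    | zero => intro r h; simp only [Nat.add_zero] at h; subst h; simp [hN]
    | succ d ih => intro r h; have := ih (r + 1) (by omega); have := hstep r (by omega); omega
  have := hle r hr
  have := hge (N - r) r (by omega)
  omega

namespace IsReducedWord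

variable {n : ℕ} {l : List ℕ}

lemma getD_mem_Icc (hl : IsReducedWord n l) {r : ℕ} (hr : r < l.length) :
    l.getD r 0 ∈ Finset.Icc 1 (n - 1) := by
  rw [List.getD_eq_getElem _ _ hr, Finset.mem_Icc]
  exact hl.2.1 _ (List.getElem_mem hr)

lemma wordEquiv_take_getD_mem_Icc (hl : IsReducedWord n l) {r : ℕ} (hr : r < l.length) :
    wordEquiv (l.take r) (l.getD r 0) ∈ Finset.Icc 1 n ∧
      wordEquiv (l.take r) (l.getD r 0 + 1) ∈ Finset.Icc 1 n := by
  have ha := Finset.mem_Icc.mp (hl.getD_mem_Icc hr)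
  have hw : ∀ x ∈ Finset.Icc 1 n, wordEquiv (l.take r) x ∈ Finset.Icc 1 n :=
    fun x => wordEquiv_mem_Icc fun a ha => hl.2.1 a (List.mem_of_mem_take ha)
  exact ⟨hw _ (by rw [Finset.mem_Icc]; omega), hw _ (by rw [Finset.mem_Icc]; omega)⟩

lemma card_inversionSet_take_succ (hl : IsReducedWord n l) {r : ℕ} (hr : r < l.length) :
    (wordEquiv (l.take r) (l.getD r 0) < wordEquiv (l.take r) (l.getD r 0 + 1) ∧
        (inversionSet n (wordEquiv (l.take (r + 1)))).card =
          (inversionSet n (wordEquiv (l.take r))).card + 1) ∨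
      (inversionSet n (wordEquiv (l.take r))).card =
        (inversionSet n (wordEquiv (l.take (r + 1)))).card + 1 := by
  rw [wordEquiv_take_succ hr]
  exact card_inversionSet_mul_swap (hl.wordEquiv_take_getD_mem_Icc hr).1
    (hl.wordEquiv_take_getD_mem_Icc hr).2

lemma card_inversionSet_take (hl : IsReducedWord n l) {r : ℕ} (hr : r ≤ l.length) :
    (inversionSet n (wordEquiv (l.take r))).card = r := by
  refine eq_self_of_step_le_one (c := fun r => (inversionSet n (wordEquiv (l.take r))).card)
    (by simp [wordEquiv, inversionSet_one]) ?_
    (fun r hr => by have := hl.card_inversionSet_take_succ hr; omega) hr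
  rw [List.take_length, inversionSet_eq_positiveRoots, card_positiveRoots, hl.1]
  intro k hk
  rw [Finset.mem_Icc] at hk
  rw [← wordPerm_eq_wordEquiv, hl.2.2 k hk.1 hk.2]

lemma wordEquiv_take_apply_lt (hl : IsReducedWord n l) {r : ℕ} (hr : r < l.length) :
    wordEquiv (l.take r) (l.getD r 0) < wordEquiv (l.take r) (l.getD r 0 + 1) := by
  have h := hl.card_inversionSet_take_succ hr
  rw [hl.card_inversionSet_take hr.le, hl.card_inversionSet_take hr] at h
  omega

lemma rootSeq_succ (hl : IsReducedWord n l) {r : ℕ} (hr : r < l.length) :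
    rootSeq l (r + 1) =
      (wordEquiv (l.take r) (l.getD r 0), wordEquiv (l.take r) (l.getD r 0 + 1)) := by
  have h := (hl.wordEquiv_take_apply_lt hr).le
  rw [rootSeq_succ_eq_min_max, min_eq_left h, max_eq_right h]

lemma inversionSet_take_succ (hl : IsReducedWord n l) {r : ℕ} (hr : r < l.length) :
    rootSeq l (r + 1) ∉ inversionSet n (wordEquiv (l.take r)) ∧
      inversionSet n (wordEquiv (l.take (r + 1))) =
        insert (rootSeq l (r + 1)) (inversionSet n (wordEquiv (l.take r))) := by
  rw [hl.rootSeq_succ hr, wordEquiv_take_succ hr]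
  exact inversionSet_mul_swap (hl.wordEquiv_take_getD_mem_Icc hr).1
    (hl.wordEquiv_take_getD_mem_Icc hr).2 (hl.wordEquiv_take_apply_lt hr)

lemma inversionSet_take_mono (hl : IsReducedWord n l) {r s : ℕ} (hrs : r ≤ s)
    (hs : s ≤ l.length) :
    inversionSet n (wordEquiv (l.take r)) ⊆ inversionSet n (wordEquiv (l.take s)) := by
  induction s, hrs using Nat.le_induction with
  | base => rfl
  | succ s _ ih =>
    rw [(hl.inversionSet_take_succ hs).2]
    exact (ih (by omega)).trans (Finset.subset_insert _ _)

lemma rootSeq_mem_inversionSet_take_succ (hl : IsReducedWord n l) {r : ℕ} (hr : r < l.length) :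
    rootSeq l (r + 1) ∈ inversionSet n (wordEquiv (l.take (r + 1))) := by
  rw [(hl.inversionSet_take_succ hr).2]
  exact Finset.mem_insert_self _ _

lemma rootSeq_mem_positiveRoots (hl : IsReducedWord n l) {r : ℕ} (hr : r < l.length) :
    rootSeq l (r + 1) ∈ positiveRoots n :=
  Finset.filter_subset _ _ (hl.rootSeq_mem_inversionSet_take_succ hr)

lemma rootSeq_injective (hl : IsReducedWord n l) {r s : ℕ} (hr : r < l.length)
    (hs : s < l.length) (h : rootSeq l (r + 1) = rootSeq l (s + 1)) : r = s := by
  have hlt : ∀ {r s}, r < s → s < l.length → rootSeq l (r + 1) ≠ rootSeq l (s + 1) :=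
    fun hrs hs h => (hl.inversionSet_take_succ hs).1 <| hl.inversionSet_take_mono hrs hs.le <|
      h ▸ hl.rootSeq_mem_inversionSet_take_succ (hrs.trans hs)
  rcases lt_trichotomy r s with hrs | rfl | hsr
  · exact absurd h (hlt hrs hs)
  · rfl
  · exact absurd h.symm (hlt hsr hr)

lemma exists_rootSeq_window (hl : IsReducedWord n l) {j c e : ℕ} (hj : j + 3 ≤ l.length)
    (h₀ : l.getD j 0 = c) (h₁ : l.getD (j + 1) 0 = e) (h₂ : l.getD (j + 2) 0 = c)
    (hce : c + 1 = e ∨ e + 1 = c) :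
    ∃ x y z, 1 ≤ x ∧ x < y ∧ y < z ∧ z ≤ n ∧ rootSeq l (j + 2) = (x, z) ∧
      (rootSeq l (j + 1) = (x, y) ∧ rootSeq l (j + 3) = (y, z) ∨
        rootSeq l (j + 1) = (y, z) ∧ rootSeq l (j + 3) = (x, y)) := by
  have hα := hl.rootSeq_succ (r := j) (by omega)
  have hγ := hl.rootSeq_succ (r := j + 1) (by omega)
  have hβ := hl.rootSeq_succ (r := j + 2) (by omega)
  have mα := hl.rootSeq_mem_positiveRoots (r := j) (by omega)
  have mβ := hl.rootSeq_mem_positiveRoots (r := j + 2) (by omega)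
  rw [wordEquiv_take_succ (by omega), wordEquiv_take_succ (by omega)] at hβ
  rw [wordEquiv_take_succ (by omega)] at hγ
  simp only [h₀, h₁, h₂, Perm.mul_apply] at hα hβ hγ
  rw [hα, mem_positiveRoots] at mα
  rw [hβ, mem_positiveRoots] at mβ
  set w := wordEquiv (l.take j)
  rcases hce with rfl | rfl <;>
    simp (disch := omega) only [swap_apply_of_ne_of_ne, swap_apply_left, swap_apply_right]
      at hβ hγ mβ
  · exact ⟨w c, w (c + 1), w (c + 1 + 1), mα.1, mα.2.1, mβ.2.1, mβ.2.2, hγ, Or.inl ⟨hα, hβ⟩⟩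
  · exact ⟨w e, w (e + 1), w (e + 1 + 1), mβ.1, mβ.2.1, mα.2.1, mα.2.2, hγ, Or.inr ⟨hα, hβ⟩⟩

end IsReducedWord

lemma take_eq_take_of_getD_eq {l l' : List ℕ} {j : ℕ} (hj : j ≤ l.length) (hj' : j ≤ l'.length)
    (h : ∀ r < j, l'.getD r 0 = l.getD r 0) : l'.take j = l.take j := by
  refine List.ext_getElem (by simp only [List.length_take]; omega) fun r hr hr' => ?_
  simp only [List.length_take] at hr hr'
  rw [List.getElem_take, List.getElem_take, ← List.getD_eq_getElem _ 0,
    ← List.getD_eq_getElem _ 0]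
  exact h r (by omega)

section BraidMove

variable {l l' : List ℕ} {j c e : ℕ} (hlen : l'.length = l.length) (hj : j + 3 ≤ l.length)
  (hagree : ∀ r < l.length, r ≠ j → r ≠ j + 1 → r ≠ j + 2 → l'.getD r 0 = l.getD r 0)
  (h₀ : l.getD j 0 = c) (h₁ : l.getD (j + 1) 0 = e) (h₂ : l.getD (j + 2) 0 = c)
  (h₀' : l'.getD j 0 = e) (h₁' : l'.getD (j + 1) 0 = c) (h₂' : l'.getD (j + 2) 0 = e)
  (hce : c + 1 = e ∨ e + 1 = c)
include hlen hj hagree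

lemma take_eq_take_of_braidMove : l'.take j = l.take j :=
  take_eq_take_of_getD_eq (by omega) (by omega) fun r hr => hagree r (by omega) (by omega)
    (by omega) (by omega)

include h₀ h₁ h₂ h₀' h₁' h₂' hce

lemma wordEquiv_take_braidMove {r : ℕ} (hr : j + 3 ≤ r) (hrl : r ≤ l.length) :
    wordEquiv (l'.take r) = wordEquiv (l.take r) := by
  induction r, hr using Nat.le_induction with
  | base =>
    have hw := take_eq_take_of_braidMove hlen hj hagree
    rw [wordEquiv_take_succ (by omega), wordEquiv_take_succ (by omega),
      wordEquiv_take_succ (by omega), wordEquiv_take_succ (by omega),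
      wordEquiv_take_succ (by omega), wordEquiv_take_succ (by omega),
      h₀, h₁, h₂, h₀', h₁', h₂', hw]
    simpa only [mul_assoc] using congrArg (wordEquiv (l.take j) * ·) (swap_braid hce).symm
  | succ r hr ih =>
    rw [wordEquiv_take_succ (by omega), wordEquiv_take_succ (by omega), ih (by omega),
      hagree r (by omega) (by omega) (by omega) (by omega)]

lemma rootSeq_braidMove_of_ne {r : ℕ} (hr : r < l.length) (hrj : r ≠ j) (hrj₁ : r ≠ j + 1)
    (hrj₂ : r ≠ j + 2) : rootSeq l' (r + 1) = rootSeq l (r + 1) := by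
  have hw : wordEquiv (l'.take r) = wordEquiv (l.take r) := by
    rcases lt_or_gt_of_ne hrj with hrj | hrj
    · rw [take_eq_take_of_getD_eq (by omega) (by omega) fun s hs =>
        hagree s (by omega) (by omega) (by omega) (by omega)]
    · exact wordEquiv_take_braidMove hlen hj hagree h₀ h₁ h₂ h₀' h₁' h₂' hce (by omega) hr.le
  rw [rootSeq_succ_eq_min_max, rootSeq_succ_eq_min_max, hw, hagree r hr hrj hrj₁ hrj₂]

lemma rootSeq_braidMove_window :
    rootSeq l' (j + 1) = rootSeq l (j + 3) ∧ rootSeq l' (j + 2) = rootSeq l (j + 2) ∧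
      rootSeq l' (j + 3) = rootSeq l (j + 1) := by
  have hw := take_eq_take_of_braidMove hlen hj hagree
  simp only [rootSeq_succ_eq_min_max, wordEquiv_take_succ (show j + 1 < l.length by omega),
    wordEquiv_take_succ (show j < l.length by omega),
    wordEquiv_take_succ (show j + 1 < l'.length by omega),
    wordEquiv_take_succ (show j < l'.length by omega), h₀, h₁, h₂, h₀', h₁', h₂', hw,
    Perm.mul_apply]
  obtain ⟨hc₁, hc₂⟩ := swap_swap_apply_of_adjacent hce
  obtain ⟨he₁, he₂⟩ := swap_swap_apply_of_adjacent hce.symm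
  obtain ⟨hγ₁, hγ₂⟩ := swap_apply_comm_of_adjacent hce
  exact ⟨by rw [hc₁, hc₂], by rw [hγ₁, hγ₂], by rw [he₁, he₂]⟩

end BraidMove

section Unipotent

variable {A : Type*} [Ring A] [Algebra K A]

lemma one_add_smul_mul_one_add_smul_mul_one_add_smul {E F : A} (hE : E * E = 0)
    (hEFE : E * F * E = 0) (x y z : K) :
    (1 + x • E) * (1 + y • F) * (1 + z • E) =
      1 + (x + z) • E + y • F + (x * y) • (E * F) + (y * z) • (F * E) := by
  have hEFE' : E * (F * E) = 0 := by rw [← mul_assoc, hEFE]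
  simp only [mul_add, add_mul, one_mul, mul_one, smul_mul_assoc, mul_smul_comm, mul_assoc, hE,
    hEFE', smul_zero]
  module

lemma unipotent_braid {E F : A} (hE : E * E = 0) (hF : F * F = 0) (hEFE : E * F * E = 0)
    (hFEF : F * E * F = 0) {p q r : K} (hpr : p + r ≠ 0) :
    (1 + p • E) * (1 + q • F) * (1 + r • E) =
      (1 + (q * r / (p + r)) • F) * (1 + (p + r) • E) * (1 + (p * q / (p + r)) • F) := by
  have hq : q * r / (p + r) + p * q / (p + r) = q := by field_simp; ring
  rw [one_add_smul_mul_one_add_smul_mul_one_add_smul hE hEFE,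
    one_add_smul_mul_one_add_smul_mul_one_add_smul hF hFEF, hq, div_mul_cancel₀ _ hpr,
    mul_div_cancel₀ _ hpr]
  abel

end Unipotent

lemma yMat_eq_one_add_smul {n i : ℕ} (hi : 1 ≤ i) (hin : i < n) (z : K) :
    yMat n i z = 1 + z • Matrix.single (⟨i, hin⟩ : Fin n) ⟨i - 1, by omega⟩ 1 := by
  ext a b
  simp only [yMat, Matrix.add_apply, Matrix.one_apply, Matrix.smul_apply, Matrix.single_apply,
    Matrix.of_apply, Fin.ext_iff, smul_eq_mul]
  split_ifs <;> first | omega | simp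

lemma yMat_braid {n c e : ℕ} (hc : 1 ≤ c) (hcn : c < n) (he : 1 ≤ e) (hen : e < n)
    {p q r : K} (hpr : p + r ≠ 0) :
    yMat n c p * yMat n e q * yMat n c r =
      yMat n e (q * r / (p + r)) * yMat n c (p + r) * yMat n e (p * q / (p + r)) := by
  simp only [yMat_eq_one_add_smul hc hcn, yMat_eq_one_add_smul he hen]
  have hsq : ∀ {a} (ha : 1 ≤ a) (han : a < n),
      Matrix.single (⟨a, han⟩ : Fin n) (⟨a - 1, by omega⟩ : Fin n) (1 : K) *
        Matrix.single (⟨a, han⟩ : Fin n) (⟨a - 1, by omega⟩ : Fin n) 1 = 0 := fun ha han =>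
    Matrix.single_mul_single_of_ne (h := by rw [ne_eq, Fin.mk.injEq]; omega) ..
  have hcube : ∀ {a b} (ha : 1 ≤ a) (han : a < n) (hb : 1 ≤ b) (hbn : b < n),
      Matrix.single (⟨a, han⟩ : Fin n) (⟨a - 1, by omega⟩ : Fin n) (1 : K) *
        Matrix.single (⟨b, hbn⟩ : Fin n) (⟨b - 1, by omega⟩ : Fin n) 1 *
          Matrix.single (⟨a, han⟩ : Fin n) (⟨a - 1, by omega⟩ : Fin n) 1 = 0 :=
    fun ha han hb hbn => by
    rw [Matrix.single_mul_mul_single]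
    simp only [Matrix.single_apply, Fin.mk.injEq]
    rw [if_neg (by omega), mul_zero, zero_mul, Matrix.single_zero]
  exact unipotent_braid (hsq hc hcn) (hsq he hen) (hcube hc hcn he hen) (hcube he hen hc hcn) hpr

lemma yMat_braid_inv {n c e : ℕ} (hc : 1 ≤ c) (hcn : c < n) (he : 1 ≤ e) (hen : e < n)
    {a b g : K} (ha : a ≠ 0) (hb : b ≠ 0) (hab : a + b ≠ 0) :
    yMat n c a⁻¹ * yMat n e g⁻¹ * yMat n c b⁻¹ =
      yMat n e (g * (a + b) / a)⁻¹ * yMat n c (a * b / (a + b))⁻¹ *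
        yMat n e (g * (a + b) / b)⁻¹ := by
  have hsum : a⁻¹ + b⁻¹ = (a + b) / (a * b) := by field_simp; ring
  rw [yMat_braid hc hcn he hen (by rw [hsum]; exact div_ne_zero hab (mul_ne_zero ha hb)), hsum]
  congr 3 <;> field_simp

lemma prod_map_range_eq_of_window {M : Type*} [Monoid M] {f g : ℕ → M} {N j : ℕ}
    (hj : j + 3 ≤ N) (hout : ∀ r < N, r ≠ j → r ≠ j + 1 → r ≠ j + 2 → f r = g r)
    (hwin : f j * f (j + 1) * f (j + 2) = g j * g (j + 1) * g (j + 2)) :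
    ((List.range N).map f).prod = ((List.range N).map g).prod := by
  induction N, hj using Nat.le_induction with
  | base =>
    have hpre : ((List.range j).map f).prod = ((List.range j).map g).prod :=
      congrArg List.prod (List.map_congr_left fun r hr => by
        rw [List.mem_range] at hr
        exact hout r (by omega) (by omega) (by omega) (by omega))
    simp only [List.prod_range_succ, hpre, mul_assoc] at hwin ⊢
    rw [hwin]
  | succ N hN ih =>
    rw [List.prod_range_succ, List.prod_range_succ, ih fun r hr => hout r (by omega),
      hout N (by omega) (by omega) (by omega) (by omega)]

lemma prod_Icc_eq_prod_Icc_of_triangle {n x y z : ℕ} {u : ℕ × ℕ → K} (hx : 1 ≤ x) (hxy : x < y)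
    (hyz : y < z) (hz : z ≤ n)
    (hu : ∀ a b, 1 ≤ a → a < b → b ≤ n → ¬(a = x ∧ b = y) → ¬(a = x ∧ b = z) →
      ¬(a = y ∧ b = z) → u (a, b) = 1)
    (h₁ : u (x, y) * u (x, z) = 1) (h₂ : u (y, z) * u (x, z) = 1) {j : ℕ} (hj : 1 ≤ j)
    (hjn : j ≤ n) :
    ∏ l ∈ Finset.Icc 1 (j - 1), u (l, j) = ∏ l ∈ Finset.Icc (j + 1) n, u (j, l) := by
  have hcol : ∀ l ∈ Finset.Icc 1 (j - 1), ¬(l = x ∧ j = y) → ¬(l = x ∧ j = z) →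
      ¬(l = y ∧ j = z) → u (l, j) = 1 := fun l hl => by
    rw [Finset.mem_Icc] at hl; exact hu l j (by omega) (by omega) hjn
  have hrow : ∀ l ∈ Finset.Icc (j + 1) n, ¬(j = x ∧ l = y) → ¬(j = x ∧ l = z) →
      ¬(j = y ∧ l = z) → u (j, l) = 1 := fun l hl => by
    rw [Finset.mem_Icc] at hl; exact hu j l hj (by omega) hl.2
  by_cases hjx : j = x
  · subst hjx
    rw [Finset.prod_eq_one fun l hl => hcol l hl (by omega) (by omega) (by omega),
      Finset.prod_eq_mul_of_mem y z (Finset.mem_Icc.mpr (by omega))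
        (Finset.mem_Icc.mpr (by omega)) (by omega) fun l hl hne =>
          hrow l hl (by omega) (by omega) (by omega), h₁]
  by_cases hjy : j = y
  · subst hjy
    rw [Finset.prod_eq_single_of_mem x (Finset.mem_Icc.mpr (by omega)) fun l hl hne =>
        hcol l hl (by omega) (by omega) (by omega),
      Finset.prod_eq_single_of_mem z (Finset.mem_Icc.mpr (by omega)) fun l hl hne =>
        hrow l hl (by omega) (by omega) (by omega)]
    exact mul_right_cancel₀ (right_ne_zero_of_mul_eq_one h₁) (h₁.trans h₂.symm)
  by_cases hjz : j = z
  · subst hjz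
    rw [Finset.prod_eq_mul_of_mem x y (Finset.mem_Icc.mpr (by omega))
        (Finset.mem_Icc.mpr (by omega)) (by omega) fun l hl hne =>
          hcol l hl (by omega) (by omega) (by omega),
      Finset.prod_eq_one fun l hl => hrow l hl (by omega) (by omega) (by omega), mul_comm, h₂]
  rw [Finset.prod_eq_one fun l hl => hcol l hl (by omega) (by omega) (by omega),
    Finset.prod_eq_one fun l hl => hrow l hl (by omega) (by omega) (by omega)]

lemma tR_eq_of_triangle {n x y z : ℕ} {m m' : ℕ × ℕ → K} (d : ℕ → K) (hx : 1 ≤ x)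
    (hxy : x < y) (hyz : y < z) (hz : z ≤ n)
    (hm : ∀ a b, 1 ≤ a → a < b → b ≤ n → m (a, b) ≠ 0)
    (hrest : ∀ ρ : ℕ × ℕ, 1 ≤ ρ.1 → ρ.1 < ρ.2 → ρ.2 ≤ n →
      ρ ≠ (x, y) → ρ ≠ (x, z) → ρ ≠ (y, z) → m' ρ = m ρ)
    (h₁ : m' (x, y) * m' (x, z) = m (x, y) * m (x, z))
    (h₂ : m' (y, z) * m' (x, z) = m (y, z) * m (x, z)) :
    tR n d m' = tR n d m := by
  set u : ℕ × ℕ → K := fun ρ => m' ρ / m ρ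
  have hm' : ∀ a b, 1 ≤ a → a < b → b ≤ n → m' (a, b) = m (a, b) * u (a, b) :=
    fun a b ha hab hb => (mul_div_cancel₀ _ (hm a b ha hab hb)).symm
  have hu : ∀ a b, 1 ≤ a → a < b → b ≤ n → ¬(a = x ∧ b = y) → ¬(a = x ∧ b = z) →
      ¬(a = y ∧ b = z) → u (a, b) = 1 := fun a b ha hab hb hxy' hxz' hyz' => by
    rw [div_eq_one_iff_eq (hm a b ha hab hb)]
    exact hrest (a, b) ha hab hb (fun h => hxy' (Prod.mk.inj h)) (fun h => hxz' (Prod.mk.inj h))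
      (fun h => hyz' (Prod.mk.inj h))
  have hu₁ : u (x, y) * u (x, z) = 1 := by
    rw [div_mul_div_comm, h₁, div_self (mul_ne_zero (hm _ _ hx hxy (by omega))
      (hm _ _ hx (by omega) hz))]
  have hu₂ : u (y, z) * u (x, z) = 1 := by
    rw [div_mul_div_comm, h₂, div_self (mul_ne_zero (hm _ _ (by omega) hyz hz)
      (hm _ _ hx (by omega) hz))]
  have hu0 : ∀ a b, 1 ≤ a → a < b → b ≤ n → u (a, b) ≠ 0 := by
    intro a b ha hab hb
    by_cases h : a = x ∧ b = y ∨ a = x ∧ b = z ∨ a = y ∧ b = z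
    · rcases h with ⟨rfl, rfl⟩ | ⟨rfl, rfl⟩ | ⟨rfl, rfl⟩
      · exact left_ne_zero_of_mul_eq_one hu₁
      · exact right_ne_zero_of_mul_eq_one hu₁
      · exact left_ne_zero_of_mul_eq_one hu₂
    · rw [hu a b ha hab hb (by tauto) (by tauto) (by tauto)]
      exact one_ne_zero
  refine congrArg Matrix.diagonal (funext fun a => ?_)
  have ha := a.isLt
  set j := n - (a : ℕ)
  have hcol : ∏ l ∈ Finset.Icc 1 (j - 1), m' (l, j) =
      (∏ l ∈ Finset.Icc 1 (j - 1), m (l, j)) * ∏ l ∈ Finset.Icc 1 (j - 1), u (l, j) := by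
    rw [← Finset.prod_mul_distrib]
    exact Finset.prod_congr rfl fun l hl => by
      rw [Finset.mem_Icc] at hl; exact hm' l j (by omega) (by omega) (by omega)
  have hrow : ∏ l ∈ Finset.Icc (j + 1) n, m' (j, l) =
      (∏ l ∈ Finset.Icc (j + 1) n, m (j, l)) * ∏ l ∈ Finset.Icc (j + 1) n, u (j, l) := by
    rw [← Finset.prod_mul_distrib]
    exact Finset.prod_congr rfl fun l hl => by
      rw [Finset.mem_Icc] at hl; exact hm' j l (by omega) (by omega) (by omega)
  have hU : ∏ l ∈ Finset.Icc (j + 1) n, u (j, l) ≠ 0 :=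
    Finset.prod_ne_zero_iff.mpr fun l hl => by
      rw [Finset.mem_Icc] at hl; exact hu0 j l (by omega) (by omega) (by omega)
  rw [hcol, hrow, prod_Icc_eq_prod_Icc_of_triangle hx hxy hyz hz hu hu₁ hu₂ (by omega) (by omega),
    ← mul_assoc, mul_div_mul_right _ _ hU]

lemma IsReducedWord.apply_rootSeq_ne_zero {n : ℕ} {l : List ℕ} {m : ℕ × ℕ → K}
    (hl : IsReducedWord n l) (hm : ∀ a b, 1 ≤ a → a < b → b ≤ n → m (a, b) ≠ 0) {r : ℕ}
    (hr : r < l.length) : m (rootSeq l (r + 1)) ≠ 0 := by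
  have hρ := mem_positiveRoots.mp (hl.rootSeq_mem_positiveRoots hr)
  exact hm _ _ hρ.1 hρ.2.1 hρ.2.2

section CoordinateChange

variable {n j c e : ℕ} {l : List ℕ} {m m' : ℕ × ℕ → K}
  (hl : IsReducedWord n l) (hj : j + 3 ≤ l.length)
  (h₀ : l.getD j 0 = c) (h₁ : l.getD (j + 1) 0 = e) (h₂ : l.getD (j + 2) 0 = c)
  (hce : c + 1 = e ∨ e + 1 = c)
  (hm : ∀ a b, 1 ≤ a → a < b → b ≤ n → m (a, b) ≠ 0)
  (hsum : m (rootSeq l (j + 1)) + m (rootSeq l (j + 3)) ≠ 0)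
  (hα : m' (rootSeq l (j + 1)) =
    m (rootSeq l (j + 2)) * (m (rootSeq l (j + 1)) + m (rootSeq l (j + 3))) /
      m (rootSeq l (j + 3)))
  (hγ : m' (rootSeq l (j + 2)) =
    m (rootSeq l (j + 1)) * m (rootSeq l (j + 3)) /
      (m (rootSeq l (j + 1)) + m (rootSeq l (j + 3))))
  (hβ : m' (rootSeq l (j + 3)) =
    m (rootSeq l (j + 2)) * (m (rootSeq l (j + 1)) + m (rootSeq l (j + 3))) /
      m (rootSeq l (j + 1)))
  (hrest : ∀ ρ : ℕ × ℕ, 1 ≤ ρ.1 → ρ.1 < ρ.2 → ρ.2 ≤ n →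
    ρ ≠ rootSeq l (j + 1) → ρ ≠ rootSeq l (j + 2) → ρ ≠ rootSeq l (j + 3) → m' ρ = m ρ)
include hl hj h₀ h₁ h₂ hce hm hsum hα hγ hβ hrest

lemma yProdRoots_eq_of_braidMove {l' : List ℕ} (hlen : l'.length = l.length)
    (hagree : ∀ r < l.length, r ≠ j → r ≠ j + 1 → r ≠ j + 2 → l'.getD r 0 = l.getD r 0)
    (h₀' : l'.getD j 0 = e) (h₁' : l'.getD (j + 1) 0 = c) (h₂' : l'.getD (j + 2) 0 = e) :
    yProdRoots n l m = yProdRoots n l' m' := by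
  obtain ⟨hα', hγ', hβ'⟩ := rootSeq_braidMove_window hlen hj hagree h₀ h₁ h₂ h₀' h₁' h₂' hce
  have hc := Finset.mem_Icc.mp (h₀ ▸ hl.getD_mem_Icc (r := j) (by omega))
  have he := Finset.mem_Icc.mp (h₁ ▸ hl.getD_mem_Icc (r := j + 1) (by omega))
  unfold yProdRoots
  rw [hlen]
  refine prod_map_range_eq_of_window hj (fun r hr hrj hrj₁ hrj₂ => ?_) ?_
  · have hρ := mem_positiveRoots.mp (hl.rootSeq_mem_positiveRoots hr)
    rw [hagree r hr hrj hrj₁ hrj₂,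
      rootSeq_braidMove_of_ne hlen hj hagree h₀ h₁ h₂ h₀' h₁' h₂' hce hr hrj hrj₁ hrj₂,
      hrest _ hρ.1 hρ.2.1 hρ.2.2 (fun h => hrj (hl.rootSeq_injective hr (by omega) h))
        (fun h => hrj₁ (hl.rootSeq_injective hr (by omega) h))
        (fun h => hrj₂ (hl.rootSeq_injective hr (by omega) h))]
  · rw [h₀, h₁, h₂, h₀', h₁', h₂', hα', hγ', hβ', hα, hγ, hβ]
    exact yMat_braid_inv (by omega) (by omega) (by omega) (by omega)
      (hl.apply_rootSeq_ne_zero hm (by omega)) (hl.apply_rootSeq_ne_zero hm (by omega)) hsum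

lemma tR_eq_of_braidMove (d : ℕ → K) : tR n d m' = tR n d m := by
  have hα0 := hl.apply_rootSeq_ne_zero hm (r := j) (by omega)
  have hβ0 := hl.apply_rootSeq_ne_zero hm (r := j + 2) (by omega)
  have hαγ : m' (rootSeq l (j + 1)) * m' (rootSeq l (j + 2)) =
      m (rootSeq l (j + 1)) * m (rootSeq l (j + 2)) := by
    rw [hα, hγ]; field_simp
  have hβγ : m' (rootSeq l (j + 3)) * m' (rootSeq l (j + 2)) =
      m (rootSeq l (j + 3)) * m (rootSeq l (j + 2)) := by
    rw [hβ, hγ]; field_simp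
  obtain ⟨x, y, z, hx, hxy, hyz, hz, hxz, hαβ⟩ := hl.exists_rootSeq_window hj h₀ h₁ h₂ hce
  rw [hxz] at hαγ hβγ hrest
  rcases hαβ with ⟨hxy', hyz'⟩ | ⟨hyz', hxy'⟩ <;> simp only [hxy', hyz'] at hαγ hβγ hrest
  · exact tR_eq_of_triangle d hx hxy hyz hz hm hrest hαγ hβγ
  · exact tR_eq_of_triangle d hx hxy hyz hz hm
      (fun ρ h₁ h₂ h₃ h₄ h₅ h₆ => hrest ρ h₁ h₂ h₃ h₆ h₅ h₄) hβγ hαγ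

end CoordinateChange

theorem stmt15_general (n : ℕ) (i i' : List ℕ)
    (hi : IsReducedWord n i) (hi' : IsReducedWord n i')
    (k c e : ℕ) (hk2 : 2 ≤ k) (hkN : k + 1 ≤ n * (n - 1) / 2)
    (hsame : ∀ r, 1 ≤ r → r ≤ n * (n - 1) / 2 → r ≠ k - 1 → r ≠ k → r ≠ k + 1 →
      i'.getD (r - 1) 0 = i.getD (r - 1) 0)
    (hce : c + 1 = e ∨ e + 1 = c)
    (hi1 : i.getD (k - 2) 0 = c) (hi2 : i.getD (k - 1) 0 = e) (hi3 : i.getD k 0 = c)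
    (hi'1 : i'.getD (k - 2) 0 = e) (hi'2 : i'.getD (k - 1) 0 = c) (hi'3 : i'.getD k 0 = e)
    (m' m'' : ℕ × ℕ → K)
    (hm' : ∀ a b : ℕ, 1 ≤ a → a < b → b ≤ n → m' (a, b) ≠ 0)
    (hsum : m' (rootSeq i (k - 1)) + m' (rootSeq i (k + 1)) ≠ 0)
    (h1 : m'' (rootSeq i (k - 1)) =
      m' (rootSeq i k) * (m' (rootSeq i (k - 1)) + m' (rootSeq i (k + 1)))
        / m' (rootSeq i (k + 1)))
    (h2 : m'' (rootSeq i k) =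
      m' (rootSeq i (k - 1)) * m' (rootSeq i (k + 1))
        / (m' (rootSeq i (k - 1)) + m' (rootSeq i (k + 1))))
    (h3 : m'' (rootSeq i (k + 1)) =
      m' (rootSeq i k) * (m' (rootSeq i (k - 1)) + m' (rootSeq i (k + 1)))
        / m' (rootSeq i (k - 1)))
    (hrest : ∀ ρ : ℕ × ℕ, 1 ≤ ρ.1 → ρ.1 < ρ.2 → ρ.2 ≤ n →
      ρ ≠ rootSeq i (k - 1) → ρ ≠ rootSeq i k → ρ ≠ rootSeq i (k + 1) →
      m'' ρ = m' ρ) :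
    yProdRoots n i m' = yProdRoots n i' m'' ∧
      ∀ d : ℕ → K, (∀ j, 1 ≤ j → j ≤ n → d j ≠ 0) → tR n d m'' = tR n d m' := by
  obtain ⟨j, rfl⟩ : ∃ j, k = j + 2 := ⟨k - 2, by omega⟩
  simp only [Nat.add_sub_cancel, show j + 2 - 1 = j + 1 from rfl,
    show j + 2 + 1 = j + 3 from rfl] at hi1 hi2 hi'1 hi'2 hsame hsum h1 h2 h3 hrest
  have hN : i.length = n * (n - 1) / 2 := hi.1
  have hagree : ∀ r < i.length, r ≠ j → r ≠ j + 1 → r ≠ j + 2 → i'.getD r 0 = i.getD r 0 :=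
    fun r hr h₁ h₂ h₃ => by
      simpa using hsame (r + 1) (by omega) (by omega) (by omega) (by omega) (by omega)
  exact ⟨yProdRoots_eq_of_braidMove hi (by omega) hi1 hi2 hi3 hce hm' hsum h1 h2 h3 hrest
      (hi'.1.trans hN.symm) hagree hi'1 hi'2 hi'3,
    fun d _ => tR_eq_of_braidMove hi (by omega) hi1 hi2 hi3 hce hm' hsum h1 h2 h3 hrest d⟩

theorem stmt15 (n : ℕ) (hn : 2 ≤ n) (i i' : List ℕ)
    (hi : IsReducedWord n i) (hi' : IsReducedWord n i')
    (k c e : ℕ) (hk2 : 2 ≤ k) (hkN : k + 1 ≤ n * (n - 1) / 2)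
    (hsame : ∀ r, 1 ≤ r → r ≤ n * (n - 1) / 2 → r ≠ k - 1 → r ≠ k → r ≠ k + 1 →
      i'.getD (r - 1) 0 = i.getD (r - 1) 0)
    (hce : c + 1 = e ∨ e + 1 = c)
    (hi1 : i.getD (k - 2) 0 = c) (hi2 : i.getD (k - 1) 0 = e) (hi3 : i.getD k 0 = c)
    (hi'1 : i'.getD (k - 2) 0 = e) (hi'2 : i'.getD (k - 1) 0 = c) (hi'3 : i'.getD k 0 = e)
    (m' m'' : ℕ × ℕ → K)
    (hm' : ∀ a b : ℕ, 1 ≤ a → a < b → b ≤ n → m' (a, b) ≠ 0)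
    (hsum : m' (rootSeq i (k - 1)) + m' (rootSeq i (k + 1)) ≠ 0)
    (h1 : m'' (rootSeq i (k - 1)) =
      m' (rootSeq i k) * (m' (rootSeq i (k - 1)) + m' (rootSeq i (k + 1)))
        / m' (rootSeq i (k + 1)))
    (h2 : m'' (rootSeq i k) =
      m' (rootSeq i (k - 1)) * m' (rootSeq i (k + 1))
        / (m' (rootSeq i (k - 1)) + m' (rootSeq i (k + 1))))
    (h3 : m'' (rootSeq i (k + 1)) =
      m' (rootSeq i k) * (m' (rootSeq i (k - 1)) + m' (rootSeq i (k + 1)))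
        / m' (rootSeq i (k - 1)))
    (hrest : ∀ ρ : ℕ × ℕ, 1 ≤ ρ.1 → ρ.1 < ρ.2 → ρ.2 ≤ n →
      ρ ≠ rootSeq i (k - 1) → ρ ≠ rootSeq i k → ρ ≠ rootSeq i (k + 1) →
      m'' ρ = m' ρ) :
    yProdRoots n i m' = yProdRoots n i' m'' ∧
      ∀ d : ℕ → K, (∀ j, 1 ≤ j → j ≤ n → d j ≠ 0) → tR n d m'' = tR n d m' :=
  stmt15_general n i i' hi hi' k c e hk2 hkN hsame hce hi1 hi2 hi3 hi'1 hi'2 hi'3 m' m'' hm' hsum h1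
    h2 h3 hrest
end
end

section
/- Let {μ_{ij}} (1 ≤ i < j ≤ n) be an ideal filling. Then for all 1 ≤ i < j < k ≤ n: μ_{ik} = max{μ_{ij}, μ_{jk}}, and consequently the tropicalized braid-move coordinate change fixes μ, i.e. μ_{ik} + min{μ_{ij}, μ_{jk}} − μ_{jk} = μ_{ij}, μ_{ij} + μ_{jk} − min{μ_{ij}, μ_{jk}} = μ_{ik}, and μ_{ik} + min{μ_{ij}, μ_{jk}} − μ_{ij} = μ_{jk}. -/
theorem stmt16_key (n : ℕ) (μ : ℕ → ℕ → ℝ)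
    (hideal : ∀ i j, 1 ≤ i → i < j → j ≤ n → 2 ≤ j - i →
      μ i j = max (μ (i + 1) j) (μ i (j - 1))) :
    ∀ d i j k, 1 ≤ i → i < j → j < k → k ≤ n → k - i ≤ d →
      μ i k = max (μ i j) (μ j k) := by
  intro d
  induction d with
  | zero => intro i j k h1 h2 h3 h4 h5; omega
  | succ d ih =>
    intro i j k h1 h2 h3 h4 h5
    by_cases hd : k - i ≤ d
    · exact ih i j k h1 h2 h3 h4 hd
    have hki : k - i = d + 1 := by omega
    have hsplit : μ i k = max (μ (i + 1) k) (μ i (k - 1)) :=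
      hideal i k h1 (by omega) h4 (by omega)
    by_cases hj1 : j = i + 1
    · by_cases hj2 : j = k - 1
      · -- k = i + 2
        rw [hsplit, ← hj1, hj2, max_comm]
      · -- j = i+1, k - 1 > j
        have h6 : μ i (k-1) = max (μ i j) (μ j (k-1)) :=
          ih i j (k-1) h1 h2 (by omega) (by omega) (by omega)
        have h7 : μ j k = max (μ (j+1) k) (μ j (k-1)) :=
          hideal j k (by omega) (by omega) h4 (by omega)
        have h8 : μ j (k-1) ≤ μ j k := h7 ▸ le_max_right _ _
        rw [hsplit, ← hj1, h6]
        rw [max_comm (μ i j) (μ j (k-1)), ← max_assoc]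
        rw [max_eq_left h8, max_comm]
    · by_cases hj2 : j = k - 1
      · have h6 : μ (i+1) k = max (μ (i+1) j) (μ j k) :=
          ih (i+1) j k (by omega) (by omega) h3 h4 (by omega)
        have h7 : μ i j = max (μ (i+1) j) (μ i (j-1)) :=
          hideal i j h1 h2 (by omega) (by omega)
        have h8 : μ (i+1) j ≤ μ i j := h7 ▸ le_max_left _ _
        rw [hsplit, h6, ← hj2, max_comm _ (μ i j), ← max_assoc, max_eq_left h8]
      · have h6 : μ (i+1) k = max (μ (i+1) j) (μ j k) :=
          ih (i+1) j k (by omega) (by omega) h3 h4 (by omega)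
        have h6' : μ i (k-1) = max (μ i j) (μ j (k-1)) :=
          ih i j (k-1) h1 h2 (by omega) (by omega) (by omega)
        have h7 : μ i j = max (μ (i+1) j) (μ i (j-1)) :=
          hideal i j h1 h2 (by omega) (by omega)
        have h8 : μ (i+1) j ≤ μ i j := h7 ▸ le_max_left _ _
        have h9 : μ j k = max (μ (j+1) k) (μ j (k-1)) :=
          hideal j k (by omega) (by omega) h4 (by omega)
        have h10 : μ j (k-1) ≤ μ j k := h9 ▸ le_max_right _ _
        rw [hsplit, h6, h6']
        apply le_antisymm
        · simp only [max_le_iff]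
          refine ⟨⟨h8.trans (le_max_left _ _), le_max_right _ _⟩,
            ⟨le_max_left _ _, h10.trans (le_max_right _ _)⟩⟩
        · simp only [max_le_iff]
          exact ⟨le_max_of_le_right (le_max_left _ _),
            le_max_of_le_left (le_max_right _ _)⟩

theorem stmt16 (n : ℕ) (hn : 2 ≤ n) (μ : ℕ → ℕ → ℝ)
    (hnonneg : ∀ i j, 1 ≤ i → i < j → j ≤ n → 0 ≤ μ i j)
    (hideal : ∀ i j, 1 ≤ i → i < j → j ≤ n → 2 ≤ j - i →
      μ i j = max (μ (i + 1) j) (μ i (j - 1))) :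
    ∀ i j k, 1 ≤ i → i < j → j < k → k ≤ n →
      μ i k = max (μ i j) (μ j k) ∧
      μ i k + min (μ i j) (μ j k) - μ j k = μ i j ∧
      μ i j + μ j k - min (μ i j) (μ j k) = μ i k ∧
      μ i k + min (μ i j) (μ j k) - μ i j = μ j k := by
  intro i j k h1 h2 h3 h4
  have hmax : μ i k = max (μ i j) (μ j k) :=
    stmt16_key n μ hideal (k - i) i j k h1 h2 h3 h4 le_rfl
  have hmm : max (μ i j) (μ j k) + min (μ i j) (μ j k) = μ i j + μ j k :=
    max_add_min _ _
  refine ⟨hmax, ?_, ?_, ?_⟩ <;> rw [hmax] <;> linarith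
end

section
/- Fix integers 1 ≤ α ≤ i ≤ n−1. For r_1,…,r_α ∈ K define n×n matrices M_1,…,M_α recursively by M_1(r_1) := x_{i−α+1}(r_1) and, for 2 ≤ j ≤ α, M_j(r_1,…,r_j) := M_{j−1}(r_1,…,r_{j−1})·x_{i−α+j}(r_j)·M_{j−1}(r_1,…,r_{j−2},−r_{j−1})·x_{i−α+j}(−r_j). Then M_α(r_1,…,r_α) = I + (r_1·r_2⋯r_α)·E_{i−α+1, i+1}, where E_{ab} denotes the n×n matrix with entry 1 in position (a,b) and 0 elsewhere. -/
open Matrix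

noncomputable section

variable {K : Type*} [Field K]

/-- The recursively defined matrices `M_j(r_1,…,r_j)` (for fixed `i`, `α`). -/
def Mrec (n i α : ℕ) : ℕ → (ℕ → K) → Matrix (Fin n) (Fin n) K
  | 0, _ => 1
  | 1, r => xMat n (i - α + 1) (r 1)
  | (j + 2), r =>
      Mrec n i α (j + 1) r * xMat n (i - α + (j + 2)) (r (j + 2)) *
        Mrec n i α (j + 1) (Function.update r (j + 1) (-(r (j + 1)))) *
        xMat n (i - α + (j + 2)) (-(r (j + 2)))

/-! By induction on `j`, `M_j = 1 + (r_1 ⋯ r_j) E_{a, a+j}` with `a = i - α` (0-based indices).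
Negating `r_{j-1}` negates this product, so the third factor in the recursion for `M_j` is the
inverse of the first, and `M_j` is a commutator of `1 + x E_{ab}` and `1 + z E_{bc}`, which equals
`1 + x z E_{ac}` for distinct `a, b, c`. -/

lemma xMat_eq_one_add_single {n k : ℕ} (a b : Fin n) (ha : (a : ℕ) + 1 = k) (hb : (b : ℕ) = k)
    (z : K) : xMat n k z = 1 + Matrix.single a b z := by
  ext c d
  simp only [xMat, of_apply, Matrix.add_apply, one_apply, single_apply, Fin.ext_iff]
  split_ifs <;> first | omega | simp

lemma one_add_single_commutator {ι R : Type*} [Fintype ι] [DecidableEq ι] [Ring R] {a b c : ι}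
    (hab : a ≠ b) (hbc : b ≠ c) (hac : a ≠ c) (x z : R) :
    (1 + single a b x) * (1 + single b c z) * (1 + single a b (-x)) * (1 + single b c (-z)) =
      1 + single a c (x * z) := by
  simp only [← single_neg, mul_add, add_mul, one_mul, mul_one, mul_neg, neg_mul,
    single_mul_single_same, single_mul_single_of_ne, ne_eq, hab.symm, hbc.symm, hac.symm,
    not_false_eq_true, add_zero]
  abel

lemma prod_update_neg {ι M : Type*} [DecidableEq ι] [CommMonoid M] [HasDistribNeg M]
    {s : Finset ι} {k : ι} (hk : k ∈ s) (f : ι → M) :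
    ∏ x ∈ s, Function.update f k (-f k) x = -∏ x ∈ s, f x := by
  rw [Finset.prod_update_of_mem hk, Finset.prod_eq_mul_prod_sdiff_singleton_of_mem hk, neg_mul]

lemma Mrec_succ_eq_one_add_single (n i α j : ℕ) (r : ℕ → K) (h : i - α + (j + 1) < n) :
    Mrec n i α (j + 1) r =
      1 + single (⟨i - α, by omega⟩ : Fin n) ⟨i - α + (j + 1), h⟩
        (∏ s ∈ Finset.Icc 1 (j + 1), r s) := by
  induction j generalizing r with
  | zero =>
    rw [Mrec, Finset.Icc_self, Finset.prod_singleton]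
    exact xMat_eq_one_add_single ⟨i - α, by omega⟩ ⟨i - α + 1, h⟩ rfl rfl (r 1)
  | succ j ih =>
    have hX (z : K) := xMat_eq_one_add_single (k := i - α + (j + 2))
      ⟨i - α + (j + 1), by omega⟩ ⟨i - α + (j + 2), h⟩ (by simp; omega) rfl z
    rw [Mrec, ih r (by omega), ih _ (by omega), hX, hX, prod_update_neg (by simp) r,
      one_add_single_commutator, ← Finset.prod_Icc_succ_top (by omega)]
    all_goals simp [Fin.ext_iff]

theorem stmt17 (n i α : ℕ) (hn : 2 ≤ n) (hα : 1 ≤ α) (hαi : α ≤ i) (hin : i ≤ n - 1)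
    (r : ℕ → K) :
    Mrec n i α α r =
      1 + Matrix.single (⟨i - α, by omega⟩ : Fin n) (⟨i, by omega⟩ : Fin n)
        (∏ s ∈ Finset.Icc 1 α, r s) := by
  obtain ⟨j, rfl⟩ := Nat.exists_eq_add_of_le' hα
  convert Mrec_succ_eq_one_add_single n i (j + 1) j r (by omega) using 3
  exact Fin.ext (by simp only; omega)
end
end

section
/- Fix block data 0 = n_0 < n_1 < … < n_l < n_{l+1} = n and let λ ∈ ℝ^n be constant on each block and dominant (λ_1 ≥ λ_2 ≥ … ≥ λ_n). Then there exists exactly one G/P-ideal filling for λ. -/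
open scoped Classical

noncomputable section

/-- `(i,j) ∈ B_P`: a pair `1 ≤ i < j ≤ n` whose entries lie in different blocks, i.e.
`i ≤ n_r < j` for some `r`. -/
def InBP (n l : ℕ) (nseq : ℕ → ℕ) (i j : ℕ) : Prop :=
  1 ≤ i ∧ i < j ∧ j ≤ n ∧ ∃ r, r ≤ l + 1 ∧ i ≤ nseq r ∧ nseq r < j

/-- A G/P-ideal filling: a nonnegative real number for each `(i,j) ∈ B_P`, such that for
every `(i,j) ∈ B_P` with `j - i ≥ 2`, `n_{ij}` equals the maximum of those among
`n_{i+1,j}` and `n_{i,j-1}` whose index pair lies in `B_P`. -/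
def GPIdealFilling (n l : ℕ) (nseq : ℕ → ℕ) (f : ℕ → ℕ → ℝ) : Prop :=
  (∀ i j, InBP n l nseq i j → 0 ≤ f i j) ∧
  ∀ i j, InBP n l nseq i j → 2 ≤ j - i →
    ((InBP n l nseq (i + 1) j ∧ InBP n l nseq i (j - 1) ∧
        f i j = max (f (i + 1) j) (f i (j - 1))) ∨
     (InBP n l nseq (i + 1) j ∧ ¬ InBP n l nseq i (j - 1) ∧ f i j = f (i + 1) j) ∨
     (¬ InBP n l nseq (i + 1) j ∧ InBP n l nseq i (j - 1) ∧ f i j = f i (j - 1)))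

/-- A G/P-ideal filling for `λ`. -/
def GPIdealFillingFor (n l : ℕ) (nseq : ℕ → ℕ) (lam : ℕ → ℝ) (ell : ℝ)
    (f : ℕ → ℕ → ℝ) : Prop :=
  GPIdealFilling n l nseq f ∧
    ∀ k, 1 ≤ k → k ≤ n →
      (∑ j ∈ Finset.Icc 1 n, if InBP n l nseq k j then f k j else 0)
        - (∑ i ∈ Finset.Icc 1 n, if InBP n l nseq i k then f i k else 0) + ell = lam k

/-!
An ideal filling is determined by its values `a c = n_{c,c+1}` at the block boundaries `c`
(the walls): `n_{ij}` is the largest `a c` over the walls `i ≤ c < j`. Work on an interval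
`(u, v]` with the constant `ℓ` satisfying `∑_{k ∈ (u, v]} (λ_k - ℓ) = 0`. Summing the row/column
conditions over `k ≤ c` shows that the pairs `i ≤ c < j` crossing the cut at `c` carry total
weight `∑_{k ∈ (u, c]} (λ_k - ℓ)`, which is nonnegative by dominance. At a wall `q` maximising
this excess divided by the number `(q - u) (v - q)` of crossing pairs, the weight must be the
maximal ratio `B`, and every crossing pair then has value `B`. Removing `q` splits the problem
into its two sides, with `ℓ` shifted by `±B` times the length of the other side, and induction on
the number of walls gives existence and uniqueness.
-/

open Finset
open scoped NNReal

namespace GPFilling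

variable (W : Finset ℕ) (a : ℕ → ℝ≥0)

def wallsIn (i j : ℕ) : Finset ℕ := {c ∈ W | i ≤ c ∧ c < j}

/-- The value `n_{ij}` of the ideal filling with `n_{c,c+1} = a c` at the walls `c ∈ W`; it is `0`
when no wall separates `i` and `j`. -/
def wallMax (i j : ℕ) : ℝ≥0 := (wallsIn W i j).sup a

variable {W a}

lemma mem_wallsIn {i j c : ℕ} : c ∈ wallsIn W i j ↔ c ∈ W ∧ i ≤ c ∧ c < j :=
  mem_filter

lemma wallMax_congr {a' : ℕ → ℝ≥0} (h : Set.EqOn a a' W) (i j : ℕ) :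
    wallMax W a i j = wallMax W a' i j :=
  sup_congr rfl fun _ hc => h (mem_wallsIn.1 hc).1

lemma wallMax_eq_zero {i j : ℕ} (h : wallsIn W i j = ∅) : wallMax W a i j = 0 := by
  rw [wallMax, h, sup_empty, bot_eq_zero']

lemma le_wallMax {c i j : ℕ} (hc : c ∈ W) (hi : i ≤ c) (hj : c < j) : a c ≤ wallMax W a i j :=
  le_sup (mem_wallsIn.2 ⟨hc, hi, hj⟩)

lemma wallMax_le {B : ℝ≥0} (h : ∀ c ∈ W, a c ≤ B) (i j : ℕ) : wallMax W a i j ≤ B :=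
  Finset.sup_le fun c hc => h c (mem_wallsIn.1 hc).1

lemma wallMax_eq_of_mem {q i j : ℕ} {B : ℝ≥0} (hq : q ∈ W) (h : ∀ c ∈ W, a c ≤ B) (haq : a q = B)
    (hi : i ≤ q) (hj : q < j) : wallMax W a i j = B :=
  (wallMax_le h i j).antisymm (haq ▸ le_wallMax hq hi hj)

lemma wallMax_succ {c : ℕ} (hc : c ∈ W) : wallMax W a c (c + 1) = a c := by
  have : wallsIn W c (c + 1) = {c} := by
    ext d; simp only [mem_wallsIn, mem_singleton]
    constructor
    · rintro ⟨-, h1, h2⟩; omega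
    · rintro rfl; exact ⟨hc, le_rfl, by omega⟩
  rw [wallMax, this, sup_singleton]

lemma wallsIn_eq_union {i j : ℕ} (h : i + 2 ≤ j) :
    wallsIn W i j = wallsIn W (i + 1) j ∪ wallsIn W i (j - 1) := by
  ext c; simp only [mem_union, mem_wallsIn]; grind

lemma wallMax_eq_max {i j : ℕ} (h : i + 2 ≤ j) :
    wallMax W a i j = max (wallMax W a (i + 1) j) (wallMax W a i (j - 1)) := by
  rw [wallMax, wallsIn_eq_union h, sup_union]; rfl

lemma wallMax_filter_lt {q i j : ℕ} (hj : j ≤ q) :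
    wallMax {c ∈ W | c < q} a i j = wallMax W a i j := by
  unfold wallMax; congr 1; ext c; simp only [mem_wallsIn, mem_filter]; grind

lemma wallMax_filter_gt {q i j : ℕ} (hi : q < i) :
    wallMax {c ∈ W | q < c} a i j = wallMax W a i j := by
  unfold wallMax; congr 1; ext c; simp only [mem_wallsIn, mem_filter]; grind

variable (W a) in
def Balanced (u v : ℕ) (lam : ℕ → ℝ) (ell : ℝ) : Prop :=
  ∀ k ∈ Ioc u v, ∑ j ∈ Ioc k v, (wallMax W a k j : ℝ) - ∑ i ∈ Ioo u k, (wallMax W a i k : ℝ)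
    + ell = lam k

def excess (lam : ℕ → ℝ) (ell : ℝ) (u c : ℕ) : ℝ := ∑ k ∈ Ioc u c, (lam k - ell)

variable {lam : ℕ → ℝ} {ell : ℝ} {u v c q : ℕ}

lemma sum_Ioc_const (x : ℝ) (h : u ≤ c) : ∑ _k ∈ Ioc u c, x = (c - u) * x := by
  rw [sum_const, Nat.card_Ioc, nsmul_eq_mul, Nat.cast_sub h]

lemma excess_add_excess (huc : u ≤ c) (hcv : c ≤ v) :
    excess lam ell u c + excess lam ell c v = excess lam ell u v :=
  sum_Ioc_consecutive _ huc hcv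

lemma excess_sub_excess (ell' : ℝ) (h : u ≤ c) :
    excess lam ell' u c - excess lam ell u c = (c - u) * (ell - ell') := by
  rw [excess, excess, ← sum_sub_distrib, ← sum_Ioc_const _ h]
  exact sum_congr rfl fun _ _ => by ring

/-- Chebyshev's sum inequality for `lam - ell` and the indicator of `k ≤ c`. -/
lemma excess_nonneg (hlam : AntitoneOn lam (Set.Ioc u v)) (h : excess lam ell u v = 0)
    (hcv : c ≤ v) : 0 ≤ excess lam ell u c := by
  let g : ℕ → ℝ := fun k => if k ≤ c then 1 else 0
  have hmono : MonovaryOn (fun k => lam k - ell) g (Ioc u v) := by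
    intro i hi j hj hij
    have hji : j < i := by
      simp only [g] at hij; split_ifs at hij <;> first | omega | norm_num at hij
    simpa using hlam (by simpa using hj) (by simpa using hi) hji.le
  have hsum : ∑ k ∈ Ioc u v, (lam k - ell) * g k = excess lam ell u c := by
    simp only [g, mul_ite, mul_one, mul_zero, ← sum_filter, excess]
    congr 1; ext k; simp only [mem_filter, mem_Ioc]; omega
  have hcheb := hmono.sum_mul_sum_le_card_mul_sum
  rw [hsum, ← excess, h, zero_mul] at hcheb
  rcases (Ioc u v).eq_empty_or_nonempty with he | hne
  · have : Ioc u c = ∅ := subset_empty.1 (he ▸ Ioc_subset_Ioc_right hcv)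
    simp [excess, this]
  · exact nonneg_of_mul_nonneg_right hcheb (by exact_mod_cast hne.card_pos)

lemma Balanced.sum_cut (h : Balanced W a u v lam ell) (hcv : c ≤ v) :
    ∑ i ∈ Ioc u c, ∑ j ∈ Ioc c v, (wallMax W a i j : ℝ) = excess lam ell u c := by
  set F : ℕ → ℕ → ℝ := fun i j => wallMax W a i j
  have htri : ∑ k ∈ Ioc u c, ∑ j ∈ Ioc k c, F k j = ∑ k ∈ Ioc u c, ∑ i ∈ Ioo u k, F i k :=
    sum_comm' fun i j => by simp only [mem_Ioc, mem_Ioo]; omega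
  have hrow : ∀ k ∈ Ioc u c,
      ∑ j ∈ Ioc k c, F k j + ∑ j ∈ Ioc c v, F k j - ∑ i ∈ Ioo u k, F i k = lam k - ell := by
    intro k hk
    rw [sum_Ioc_consecutive _ (mem_Ioc.1 hk).2 hcv]
    have := h k (Ioc_subset_Ioc_right hcv hk)
    linarith
  rw [excess, ← sum_congr rfl hrow, sum_sub_distrib, sum_add_distrib, htri]
  ring

lemma Balanced.mul_le_excess (h : Balanced W a u v lam ell) (hc : c ∈ W) (huc : u ≤ c)
    (hcv : c ≤ v) : (c - u) * (v - c) * (a c : ℝ) ≤ excess lam ell u c := by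
  rw [← h.sum_cut hcv, mul_assoc, ← sum_Ioc_const _ huc, ← sum_Ioc_const _ hcv]
  gcongr with i hi j hj
  exact le_wallMax hc (mem_Ioc.1 hi).2 (mem_Ioc.1 hj).1

lemma Balanced.le_of_excess_le (h : Balanced W a u v lam ell) (hc : c ∈ W) (huc : u < c)
    (hcv : c < v) {B : ℝ≥0} (hB : excess lam ell u c ≤ (c - u) * (v - c) * B) : a c ≤ B := by
  have hpos : (0 : ℝ) < (c - u) * (v - c) :=
    mul_pos (sub_pos.2 (by exact_mod_cast huc)) (sub_pos.2 (by exact_mod_cast hcv))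
  exact_mod_cast le_of_mul_le_mul_left ((h.mul_le_excess hc huc.le hcv.le).trans hB) hpos

/-- The cut sum at `q` is `(q - u) * (v - q) * B` and each of its terms is at most `B`, so all of
them equal `B`, among them `wallMax W a q (q + 1) = a q`. -/
lemma Balanced.eq_of_excess_eq (h : Balanced W a u v lam ell) {B : ℝ≥0}
    (hle : ∀ c ∈ W, a c ≤ B) (hq : q ∈ W) (huq : u < q) (hqv : q < v)
    (hex : excess lam ell u q = (q - u) * (v - q) * B) : a q = B := by
  refine (hle q hq).antisymm (not_lt.1 fun hlt => ?_)
  have hcut : ∑ i ∈ Ioc u q, ∑ j ∈ Ioc q v, (wallMax W a i j : ℝ)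
      < ∑ i ∈ Ioc u q, ∑ j ∈ Ioc q v, (B : ℝ) := by
    have hwall : ∀ i j, (wallMax W a i j : ℝ) ≤ B := fun i j => wallMax_le hle i j
    refine sum_lt_sum (fun i _ => sum_le_sum fun j _ => hwall i j)
      ⟨q, mem_Ioc.2 ⟨huq, le_rfl⟩, sum_lt_sum (fun j _ => hwall q j) ⟨q + 1, ?_, ?_⟩⟩
    · exact mem_Ioc.2 ⟨q.lt_succ_self, hqv⟩
    · rw [wallMax_succ hq]; exact_mod_cast hlt
  rw [h.sum_cut hqv.le, sum_Ioc_const _ hqv.le, sum_Ioc_const _ huq.le, hex] at hcut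
  linarith

lemma balanced_congr {a' : ℕ → ℝ≥0} (h : Set.EqOn a a' W) :
    Balanced W a u v lam ell ↔ Balanced W a' u v lam ell := by
  simp only [Balanced, wallMax_congr h]

lemma balanced_empty (hconst : ∀ k ∈ Ioo u v, lam k = lam (k + 1))
    (hex : excess lam ell u v = 0) : Balanced ∅ a u v lam ell := by
  have hlam : ∀ k, u + 1 ≤ k → k ≤ v → lam k = lam (u + 1) := by
    intro k huk
    induction k, huk using Nat.le_induction with
    | base => intro _; rfl
    | succ k hk ih => intro hkv; rw [← hconst k (mem_Ioo.2 ⟨hk, hkv⟩), ih (by omega)]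
  intro k hk
  obtain ⟨huk, hkv⟩ := mem_Ioc.1 hk
  have huv : (0 : ℝ) < v - u := sub_pos.2 (by exact_mod_cast huk.trans_le hkv)
  rw [excess, sum_congr rfl fun i hi => by rw [hlam i (mem_Ioc.1 hi).1 (mem_Ioc.1 hi).2],
    sum_Ioc_const _ (by omega)] at hex
  have hell : lam (u + 1) = ell := by
    have := (mul_eq_zero.1 hex).resolve_left huv.ne'; linarith
  simp [wallMax_eq_zero (W := ∅) (filter_empty _), hlam k huk hkv, hell]

/-- Cutting at a wall `q` of maximal weight `B`: every pair `i ≤ q < j` then has value `B`,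
which shifts the constant `ell` of the two halves. -/
lemma balanced_iff_split (hq : q ∈ W) (huq : u ≤ q) (hqv : q ≤ v) {B : ℝ≥0}
    (hle : ∀ c ∈ W, a c ≤ B) (haq : a q = B) :
    Balanced W a u v lam ell ↔
      Balanced {c ∈ W | c < q} a u q lam (ell + (v - q) * B) ∧
        Balanced {c ∈ W | q < c} a q v lam (ell - (q - u) * B) := by
  have hcross : ∀ i j, i ≤ q → q < j → (wallMax W a i j : ℝ) = B := fun i j hi hj => by
    rw [wallMax_eq_of_mem hq hle haq hi hj]
  have hleft : ∀ k ∈ Ioc u q,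
      ∑ j ∈ Ioc k v, (wallMax W a k j : ℝ) - ∑ i ∈ Ioo u k, (wallMax W a i k : ℝ)
        = ∑ j ∈ Ioc k q, (wallMax {c ∈ W | c < q} a k j : ℝ)
          - ∑ i ∈ Ioo u k, (wallMax {c ∈ W | c < q} a i k : ℝ) + (v - q) * B := by
    intro k hk
    have hkq := (mem_Ioc.1 hk).2
    rw [← sum_Ioc_consecutive _ hkq hqv, ← sum_Ioc_const _ hqv,
      sum_congr rfl fun j hj => hcross k j hkq (mem_Ioc.1 hj).1,
      sum_congr rfl fun j hj => congrArg _ (wallMax_filter_lt (mem_Ioc.1 hj).2).symm,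
      sum_congr rfl fun i _ => congrArg _ (wallMax_filter_lt hkq).symm]
    ring
  have hright : ∀ k ∈ Ioc q v,
      ∑ j ∈ Ioc k v, (wallMax W a k j : ℝ) - ∑ i ∈ Ioo u k, (wallMax W a i k : ℝ)
        = ∑ j ∈ Ioc k v, (wallMax {c ∈ W | q < c} a k j : ℝ)
          - ∑ i ∈ Ioo q k, (wallMax {c ∈ W | q < c} a i k : ℝ) - (q - u) * B := by
    intro k hk
    have hqk := (mem_Ioc.1 hk).1
    have hsplit : Ioo u k = Ioc u q ∪ Ioo q k := by
      ext; simp only [mem_union, mem_Ioc, mem_Ioo]; omega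
    have hdisj : Disjoint (Ioc u q) (Ioo q k) := disjoint_left.2 fun i hi hi' => by
      simp only [mem_Ioc, mem_Ioo] at hi hi'; omega
    rw [hsplit, sum_union hdisj, ← sum_Ioc_const _ huq,
      sum_congr rfl fun i hi => hcross i k (mem_Ioc.1 hi).2 hqk,
      sum_congr rfl fun j _ => congrArg _ (wallMax_filter_gt hqk).symm,
      sum_congr rfl fun i hi => congrArg _ (wallMax_filter_gt (mem_Ioo.1 hi).1).symm]
    ring
  rw [Balanced, ← Ioc_union_Ioc_eq_Ioc huq hqv, forall_mem_union]
  refine and_congr (forall₂_congr fun k hk => ?_) (forall₂_congr fun k hk => ?_)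
  · rw [hleft k hk]; constructor <;> intro h <;> linarith
  · rw [hright k hk]; constructor <;> intro h <;> linarith

lemma balanced_ite (hq : q ∈ W) (huq : u < q) (hqv : q < v) (hW : ∀ c ∈ W, u < c ∧ c < v)
    {B : ℝ≥0} (hex : excess lam ell u q = (q - u) * (v - q) * B)
    (hbound : ∀ c ∈ W, excess lam ell u c ≤ (c - u) * (v - c) * B) {aL aR : ℕ → ℝ≥0}
    (haL : Balanced {c ∈ W | c < q} aL u q lam (ell + (v - q) * B))
    (haR : Balanced {c ∈ W | q < c} aR q v lam (ell - (q - u) * B)) :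
    Balanced W (fun c => if c < q then aL c else if c = q then B else aR c) u v lam ell := by
  set WL : Finset ℕ := {c ∈ W | c < q}
  set WR : Finset ℕ := {c ∈ W | q < c}
  set a : ℕ → ℝ≥0 := fun c => if c < q then aL c else if c = q then B else aR c
  have hEqL : Set.EqOn a aL WL := fun c hc => if_pos (mem_filter.1 hc).2
  have hEqR : Set.EqOn a aR WR := fun c hc => by
    have := (mem_filter.1 hc).2
    simp only [a, if_neg (lt_asymm this), if_neg this.ne']
  have haq : a q = B := by simp [a]
  have hle : ∀ c ∈ W, a c ≤ B := by
    intro c hc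
    obtain ⟨huc, hcv⟩ := hW c hc
    rcases lt_trichotomy c q with hcq | rfl | hqc
    · have hcL : c ∈ WL := mem_filter.2 ⟨hc, hcq⟩
      rw [hEqL hcL]
      refine haL.le_of_excess_le hcL huc hcq ?_
      have := excess_sub_excess (lam := lam) (ell := ell) (ell + (v - q) * B) huc.le
      linarith [hbound c hc]
    · exact haq.le
    · have hcR : c ∈ WR := mem_filter.2 ⟨hc, hqc⟩
      rw [hEqR hcR]
      refine haR.le_of_excess_le hcR hqc hcv ?_
      have := excess_sub_excess (lam := lam) (ell := ell) (ell - (q - u) * B) hqc.le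
      have := excess_add_excess (lam := lam) (ell := ell) huq.le hqc.le
      linarith [hbound c hc]
  exact (balanced_iff_split hq huq.le hqv.le hle haq).2
    ⟨(balanced_congr hEqL).2 haL, (balanced_congr hEqR).2 haR⟩

lemma Balanced.split (h : Balanced W a u v lam ell) (hq : q ∈ W) (huq : u < q) (hqv : q < v)
    (hW : ∀ c ∈ W, u < c ∧ c < v) {B : ℝ≥0}
    (hex : excess lam ell u q = (q - u) * (v - q) * B)
    (hbound : ∀ c ∈ W, excess lam ell u c ≤ (c - u) * (v - c) * B) :
    a q = B ∧ Balanced {c ∈ W | c < q} a u q lam (ell + (v - q) * B) ∧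
      Balanced {c ∈ W | q < c} a q v lam (ell - (q - u) * B) := by
  have hle : ∀ c ∈ W, a c ≤ B := fun c hc =>
    h.le_of_excess_le hc (hW c hc).1 (hW c hc).2 (hbound c hc)
  have haq := h.eq_of_excess_eq hle hq huq hqv hex
  exact ⟨haq, (balanced_iff_split hq huq.le hqv.le hle haq).1 h⟩

variable (W) in
def ExistsUniqueBalanced (u v : ℕ) (lam : ℕ → ℝ) (ell : ℝ) : Prop :=
  ∃ a, Balanced W a u v lam ell ∧ ∀ a', Balanced W a' u v lam ell → Set.EqOn a' a W

lemma existsUniqueBalanced_of_split (hq : q ∈ W) (huq : u < q) (hqv : q < v)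
    (hW : ∀ c ∈ W, u < c ∧ c < v) {B : ℝ≥0}
    (hex : excess lam ell u q = (q - u) * (v - q) * B)
    (hbound : ∀ c ∈ W, excess lam ell u c ≤ (c - u) * (v - c) * B)
    (hL : ExistsUniqueBalanced {c ∈ W | c < q} u q lam (ell + (v - q) * B))
    (hR : ExistsUniqueBalanced {c ∈ W | q < c} q v lam (ell - (q - u) * B)) :
    ExistsUniqueBalanced W u v lam ell := by
  obtain ⟨aL, haL, huniqL⟩ := hL
  obtain ⟨aR, haR, huniqR⟩ := hR
  refine ⟨_, balanced_ite hq huq hqv hW hex hbound haL haR, fun a' ha' c hc => ?_⟩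
  obtain ⟨ha'q, ha'L, ha'R⟩ := ha'.split hq huq hqv hW hex hbound
  rcases lt_trichotomy c q with hcq | rfl | hqc
  · simp [hcq, huniqL a' ha'L (mem_filter.2 ⟨hc, hcq⟩)]
  · simp [ha'q]
  · simp [hqc.ne', hqc.not_gt, huniqR a' ha'R (mem_filter.2 ⟨hc, hqc⟩)]

theorem existsUniqueBalanced (hW : ∀ c ∈ W, u < c ∧ c < v)
    (hconst : ∀ k ∈ Ioo u v, k ∉ W → lam k = lam (k + 1))
    (hlam : AntitoneOn lam (Set.Ioc u v)) (hex : excess lam ell u v = 0) :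
    ExistsUniqueBalanced W u v lam ell := by
  induction W using Finset.strongInduction generalizing u v ell with
  | H W ih =>
  rcases W.eq_empty_or_nonempty with rfl | hne
  · exact ⟨0, balanced_empty (fun k hk => hconst k hk (notMem_empty k)) hex,
      fun _ _ c hc => absurd hc (notMem_empty c)⟩
  have hpos : ∀ c ∈ W, (0 : ℝ) < (c - u) * (v - c) := fun c hc =>
    mul_pos (sub_pos.2 (by exact_mod_cast (hW c hc).1)) (sub_pos.2 (by exact_mod_cast (hW c hc).2))
  obtain ⟨q, hq, hmax⟩ :=
    exists_max_image W (fun c => excess lam ell u c / ((c - u) * (v - c))) hne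
  obtain ⟨huq, hqv⟩ := hW q hq
  let B : ℝ≥0 := ⟨_, div_nonneg (excess_nonneg hlam hex hqv.le) (hpos q hq).le⟩
  have hexq : excess lam ell u q = (q - u) * (v - q) * B :=
    (mul_div_cancel₀ _ (hpos q hq).ne').symm
  have hbound : ∀ c ∈ W, excess lam ell u c ≤ (c - u) * (v - c) * B := fun c hc =>
    (div_le_iff₀' (hpos c hc)).1 (hmax c hc)
  have hL := ih {c ∈ W | c < q} (filter_ssubset.2 ⟨q, hq, lt_irrefl q⟩)
    (u := u) (v := q) (ell := ell + (v - q) * B)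
    (fun c hc => ⟨(hW c (mem_filter.1 hc).1).1, (mem_filter.1 hc).2⟩)
    (fun k hk hkL => hconst k (Ioo_subset_Ioo_right hqv.le hk)
      fun hkW => hkL (mem_filter.2 ⟨hkW, (mem_Ioo.1 hk).2⟩))
    (hlam.mono (Set.Ioc_subset_Ioc_right hqv.le))
    (by linarith [excess_sub_excess (lam := lam) (ell := ell) (ell + (v - q) * B) huq.le])
  have hR := ih {c ∈ W | q < c} (filter_ssubset.2 ⟨q, hq, lt_irrefl q⟩)
    (u := q) (v := v) (ell := ell - (q - u) * B)
    (fun c hc => ⟨(mem_filter.1 hc).2, (hW c (mem_filter.1 hc).1).2⟩)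
    (fun k hk hkR => hconst k (Ioo_subset_Ioo_left huq.le hk)
      fun hkW => hkR (mem_filter.2 ⟨hkW, (mem_Ioo.1 hk).1⟩))
    (hlam.mono (Set.Ioc_subset_Ioc_left huq.le))
    (by linarith [excess_sub_excess (lam := lam) (ell := ell) (ell - (q - u) * B) hqv.le,
      excess_add_excess (lam := lam) (ell := ell) huq.le hqv.le])
  exact existsUniqueBalanced_of_split hq huq hqv hW hexq hbound hL hR

def bpWalls (n l : ℕ) (nseq : ℕ → ℕ) : Finset ℕ := {c ∈ Ioo 0 n | ∃ r ≤ l + 1, nseq r = c}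

variable {n l : ℕ} {nseq : ℕ → ℕ} {i j k : ℕ}

lemma inBP_iff :
    InBP n l nseq i j ↔ 1 ≤ i ∧ j ≤ n ∧ (wallsIn (bpWalls n l nseq) i j).Nonempty := by
  simp only [InBP, Finset.Nonempty, mem_wallsIn, bpWalls, mem_filter, mem_Ioo]
  constructor
  · rintro ⟨hi, -, hj, r, hr, hir, hrj⟩
    exact ⟨hi, hj, nseq r, ⟨⟨by omega, by omega⟩, r, hr, rfl⟩, hir, hrj⟩
  · rintro ⟨hi, hj, _, ⟨-, r, hr, rfl⟩, hir, hrj⟩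
    exact ⟨hi, by omega, hj, r, hr, hir, hrj⟩

lemma wallMax_bpWalls_eq_zero (hi : 1 ≤ i) (hj : j ≤ n) (h : ¬InBP n l nseq i j) :
    wallMax (bpWalls n l nseq) a i j = 0 :=
  wallMax_eq_zero (not_nonempty_iff_eq_empty.1 fun hne => h (inBP_iff.2 ⟨hi, hj, hne⟩))

lemma gpIdealFilling_wallMax (a : ℕ → ℝ≥0) :
    GPIdealFilling n l nseq fun i j => (wallMax (bpWalls n l nseq) a i j : ℝ) := by
  refine ⟨fun _ _ _ => NNReal.coe_nonneg _, fun i j hij hji => ?_⟩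
  dsimp only
  obtain ⟨hi, hj, hne⟩ := inBP_iff.1 hij
  have hmax : (wallMax (bpWalls n l nseq) a i j : ℝ) =
      max (wallMax (bpWalls n l nseq) a (i + 1) j : ℝ) (wallMax (bpWalls n l nseq) a i (j - 1)) := by
    rw [wallMax_eq_max (by omega), NNReal.coe_max]
  by_cases hA : InBP n l nseq (i + 1) j <;> by_cases hB : InBP n l nseq i (j - 1)
  · exact Or.inl ⟨hA, hB, hmax⟩
  · refine Or.inr (Or.inl ⟨hA, hB, ?_⟩)
    rw [hmax, wallMax_bpWalls_eq_zero hi (by omega) hB]; simp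
  · refine Or.inr (Or.inr ⟨hA, hB, ?_⟩)
    rw [hmax, wallMax_bpWalls_eq_zero (by omega) hj hA]; simp
  · rw [wallsIn_eq_union (by omega), union_nonempty] at hne
    exact hne.elim (fun h => absurd (inBP_iff.2 ⟨by omega, hj, h⟩) hA)
      fun h => absurd (inBP_iff.2 ⟨hi, by omega, h⟩) hB

lemma GPIdealFilling.eq_wallMax {f : ℕ → ℕ → ℝ} (hf : GPIdealFilling n l nseq f)
    (hij : InBP n l nseq i j) :
    f i j = wallMax (bpWalls n l nseq) (fun c => (f c (c + 1)).toNNReal) i j := by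
  induction hd : j - i using Nat.strong_induction_on generalizing i j with
  | _ d ih =>
  obtain ⟨hi, hj, c, hc⟩ := inBP_iff.1 hij
  obtain ⟨hcW, hic, hcj⟩ := mem_wallsIn.1 hc
  rcases lt_or_ge (j - i) 2 with hji | hji
  · obtain rfl : j = i + 1 := by omega
    obtain rfl : c = i := by omega
    rw [wallMax_succ hcW, Real.coe_toNNReal _ (hf.1 _ _ hij)]
  · rw [wallMax_eq_max (by omega), NNReal.coe_max]
    rcases hf.2 i j hij hji with ⟨hA, hB, h⟩ | ⟨hA, hB, h⟩ | ⟨hA, hB, h⟩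
    · rw [h, ih _ (by omega) hA rfl, ih _ (by omega) hB rfl]
    · rw [h, ih _ (by omega) hA rfl, wallMax_bpWalls_eq_zero hi (by omega) hB]; simp
    · rw [h, ih _ (by omega) hB rfl, wallMax_bpWalls_eq_zero (by omega) hj hA]; simp

variable {f : ℕ → ℕ → ℝ}

lemma sum_row_eq (hf : ∀ i j, InBP n l nseq i j → f i j = wallMax (bpWalls n l nseq) a i j)
    (hk : 1 ≤ k) :
    ∑ j ∈ Icc 1 n, (if InBP n l nseq k j then f k j else 0)
      = ∑ j ∈ Ioc k n, (wallMax (bpWalls n l nseq) a k j : ℝ) := by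
  rw [← sum_subset (s₁ := Ioc k n) (fun j hj => by simp only [mem_Ioc, mem_Icc] at hj ⊢; omega)
    fun j _ hj => if_neg fun h => hj (mem_Ioc.2 ⟨h.2.1, h.2.2.1⟩)]
  refine sum_congr rfl fun j hj => ?_
  split_ifs with h
  · exact hf k j h
  · rw [wallMax_bpWalls_eq_zero hk (mem_Ioc.1 hj).2 h, NNReal.coe_zero]

lemma sum_col_eq (hf : ∀ i j, InBP n l nseq i j → f i j = wallMax (bpWalls n l nseq) a i j)
    (hk : k ≤ n) :
    ∑ i ∈ Icc 1 n, (if InBP n l nseq i k then f i k else 0)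
      = ∑ i ∈ Ioo 0 k, (wallMax (bpWalls n l nseq) a i k : ℝ) := by
  rw [← sum_subset (s₁ := Ioo 0 k) (fun i hi => by simp only [mem_Ioo, mem_Icc] at hi ⊢; omega)
    fun i _ hi => if_neg fun h => hi (mem_Ioo.2 ⟨h.1, h.2.1⟩)]
  refine sum_congr rfl fun i hi => ?_
  split_ifs with h
  · exact hf i k h
  · rw [wallMax_bpWalls_eq_zero (mem_Ioo.1 hi).1 hk h, NNReal.coe_zero]

lemma gpIdealFillingFor_iff {lam : ℕ → ℝ} {ell : ℝ}
    (hf : ∀ i j, InBP n l nseq i j → f i j = wallMax (bpWalls n l nseq) a i j) :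
    GPIdealFillingFor n l nseq lam ell f ↔
      GPIdealFilling n l nseq f ∧ Balanced (bpWalls n l nseq) a 0 n lam ell := by
  refine and_congr_right fun _ => forall_congr' fun k => ?_
  simp only [mem_Ioc, Nat.lt_iff_add_one_le, zero_add]
  constructor
  · rintro h ⟨hk, hkn⟩; rw [← h hk hkn, sum_row_eq hf hk, sum_col_eq hf hkn]
  · rintro h hk hkn; rw [← h ⟨hk, hkn⟩, sum_row_eq hf hk, sum_col_eq hf hkn]

end GPFilling

open GPFilling

theorem stmt18_general (n l : ℕ) (nseq : ℕ → ℕ)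
    (lam : ℕ → ℝ)
    (hblocks : ∀ k, 1 ≤ k → k + 1 ≤ n → (∀ r, r ≤ l + 1 → nseq r ≠ k) →
      lam k = lam (k + 1))
    (hdom : ∀ k, 1 ≤ k → k + 1 ≤ n → lam (k + 1) ≤ lam k)
    (ell : ℝ) (hell : ell = (∑ i ∈ Finset.Icc 1 n, lam i) / n) :
    ∃ f : ℕ → ℕ → ℝ, GPIdealFillingFor n l nseq lam ell f ∧
      ∀ g : ℕ → ℕ → ℝ, GPIdealFillingFor n l nseq lam ell g →
        ∀ i j, InBP n l nseq i j → g i j = f i j := by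
  have hW : ∀ c ∈ bpWalls n l nseq, 0 < c ∧ c < n := fun c hc => mem_Ioo.1 (mem_filter.1 hc).1
  have hconst : ∀ k ∈ Ioo 0 n, k ∉ bpWalls n l nseq → lam k = lam (k + 1) := fun k hk hkW =>
    hblocks k (mem_Ioo.1 hk).1 (mem_Ioo.1 hk).2 fun r hr hrk => hkW (mem_filter.2 ⟨hk, r, hr, hrk⟩)
  have hanti : AntitoneOn lam (Set.Ioc 0 n) :=
    antitoneOn_of_add_one_le Set.ordConnected_Ioc fun k _ hk hk1 => hdom k hk.1 hk1.2
  have hex : excess lam ell 0 n = 0 := by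
    rcases eq_or_ne n 0 with rfl | hn
    · simp [excess]
    rw [excess, sum_sub_distrib, sum_Ioc_const _ (Nat.zero_le n), hell, ← Icc_add_one_left_eq_Ioc,
      zero_add, Nat.cast_zero, sub_zero, mul_div_cancel₀ _ (Nat.cast_ne_zero.2 hn), sub_self]
  obtain ⟨a, ha, huniq⟩ := existsUniqueBalanced hW hconst hanti hex
  refine ⟨fun i j => wallMax (bpWalls n l nseq) a i j,
    (gpIdealFillingFor_iff fun _ _ _ => rfl).2 ⟨gpIdealFilling_wallMax a, ha⟩,
    fun g hg i j hij => ?_⟩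
  have hgW : ∀ i j, InBP n l nseq i j →
      g i j = wallMax (bpWalls n l nseq) (fun c => (g c (c + 1)).toNNReal) i j :=
    fun _ _ => hg.1.eq_wallMax
  rw [hgW i j hij, wallMax_congr (huniq _ ((gpIdealFillingFor_iff hgW).1 hg).2)]

theorem stmt18 (n l : ℕ) (hn : 2 ≤ n) (nseq : ℕ → ℕ)
    (h0 : nseq 0 = 0) (hlast : nseq (l + 1) = n)
    (hmono : ∀ r, r ≤ l → nseq r < nseq (r + 1))
    (lam : ℕ → ℝ)
    (hblocks : ∀ k, 1 ≤ k → k + 1 ≤ n → (∀ r, r ≤ l + 1 → nseq r ≠ k) →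
      lam k = lam (k + 1))
    (hdom : ∀ k, 1 ≤ k → k + 1 ≤ n → lam (k + 1) ≤ lam k)
    (ell : ℝ) (hell : ell = (∑ i ∈ Finset.Icc 1 n, lam i) / n) :
    ∃ f : ℕ → ℕ → ℝ, GPIdealFillingFor n l nseq lam ell f ∧
      ∀ g : ℕ → ℕ → ℝ, GPIdealFillingFor n l nseq lam ell g →
        ∀ i j, InBP n l nseq i j → g i j = f i j :=
  stmt18_general n l nseq lam hblocks hdom ell hell
end
end
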